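/- arXiv:2312.10533 — 5 statements merged into one kernel-verified Lean document; each statement's English description precedes it below -/
import Mathlib

section
/- Let (k_i)_{i≥1} be a sequence of positive integers satisfying condition (★). Then for every m ≥ 1 there exists n ≥ m such that every entry of the matrix product A_{k_m} A_{k_{m+1}} ⋯ A_{k_n} is strictly positive; equivalently, for every m there is n ≥ m such that for every letter a ∈ {1,2,3} the word χ_{k_m}∘χ_{k_{m+1}}∘⋯∘χ_{k_n}(a) contains every letter of {1,2,3} (the S-adic system based on (χ_{k_i}) is primitive). -/
open Filter Topology MeasureTheory

/-- The substitution `χ_k` on the alphabet `{1,2,3}`, coded as `Fin 3 = {0,1,2}`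
(letter 1 ↦ 0, letter 2 ↦ 1, letter 3 ↦ 2):
`χ_k(1) = 2`, `χ_k(2) = 3 1^k`, `χ_k(3) = 3 1^(k-1)`. -/
def chiSub (k : ℕ) : Fin 3 → List (Fin 3) :=
  ![[1], 2 :: List.replicate k 0, 2 :: List.replicate (k - 1) 0]

/-- Extension of `χ_k` to finite words by concatenation. -/
def applyChi (k : ℕ) (w : List (Fin 3)) : List (Fin 3) := w.flatMap (chiSub k)

/-- `compApply k n w = χ_{k 1} ∘ χ_{k 2} ∘ ⋯ ∘ χ_{k n} (w)`. -/
def compApply (k : ℕ → ℕ) : ℕ → List (Fin 3) → List (Fin 3)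
  | 0, w => w
  | n + 1, w => compApply k n (applyChi (k (n + 1)) w)

/-- Condition (★): k_{2i} > 1` for infinitely many `i` and `k_{2i-1} > 1`
for infinitely many `i`. -/
def StarCond (k : ℕ → ℕ) : Prop :=
  (∀ N, ∃ i ≥ N, 1 < k (2 * i)) ∧ (∀ N, ∃ i ≥ N, 1 < k (2 * i - 1))

/-- `w` is a prefix of the infinite sequence `x`. -/
def IsPrefixSeq (w : List (Fin 3)) (x : ℕ → Fin 3) : Prop :=
  w = List.ofFn fun i : Fin w.length => x i

/-- The left shift `σ`. -/
def shift (x : ℕ → Fin 3) : ℕ → Fin 3 := fun i => x (i + 1)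

/-- The closure of the `σ`-orbit of `ρ`: the subshift `X`. -/
def orbitClosure (ρ : ℕ → Fin 3) : Set (ℕ → Fin 3) :=
  closure {y | ∃ n : ℕ, y = fun i => ρ (i + n)}

/-- The matrix `A_k`, with rows `(0,k,k-1)`, `(1,0,0)`, `(0,1,1)`. -/
def AmatZ (k : ℕ) : Matrix (Fin 3) (Fin 3) ℤ :=
  !![0, (k : ℤ), (k : ℤ) - 1; 1, 0, 0; 0, 1, 1]

/-- `compRange k m len w = χ_{k m} ∘ χ_{k (m+1)} ∘ ⋯ ∘ χ_{k (m+len-1)} (w)`. -/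
def compRange (k : ℕ → ℕ) (m : ℕ) : ℕ → List (Fin 3) → List (Fin 3)
  | 0, w => w
  | len + 1, w => compRange k m len (applyChi (k (m + len)) w)


/-! ### Auxiliary lemmas -/

lemma mem_applyChi {K : ℕ} {w : List (Fin 3)} {a b : Fin 3}
    (ha : a ∈ w) (hb : b ∈ chiSub K a) : b ∈ applyChi K w :=
  List.mem_flatMap.2 ⟨a, ha, hb⟩

lemma mem1_of_mem0 {K : ℕ} {w : List (Fin 3)} (h : (0 : Fin 3) ∈ w) :
    (1 : Fin 3) ∈ applyChi K w :=
  mem_applyChi h (by simp [chiSub])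

lemma mem0_of_mem1 {K : ℕ} (hK : 1 ≤ K) {w : List (Fin 3)} (h : (1 : Fin 3) ∈ w) :
    (0 : Fin 3) ∈ applyChi K w :=
  mem_applyChi h (by simp [chiSub, List.mem_replicate]; omega)

lemma mem2_of_mem1 {K : ℕ} {w : List (Fin 3)} (h : (1 : Fin 3) ∈ w) :
    (2 : Fin 3) ∈ applyChi K w :=
  mem_applyChi h (by simp [chiSub])

lemma mem2_of_mem2 {K : ℕ} {w : List (Fin 3)} (h : (2 : Fin 3) ∈ w) :
    (2 : Fin 3) ∈ applyChi K w :=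
  mem_applyChi h (by simp [chiSub])

lemma mem0_of_mem2 {K : ℕ} (hK : 2 ≤ K) {w : List (Fin 3)} (h : (2 : Fin 3) ∈ w) :
    (0 : Fin 3) ∈ applyChi K w :=
  mem_applyChi h (by simp [chiSub, List.mem_replicate]; omega)

lemma compRange_succ_outer (k : ℕ → ℕ) (l : ℕ) :
    ∀ m w, compRange k m (l + 1) w = applyChi (k m) (compRange k (m + 1) l w) := by
  induction l with
  | zero => intro m w; rfl
  | succ l ih =>
    intro m w
    show compRange k m (l + 1) (applyChi (k (m + (l+1))) w) = _
    rw [ih]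
    have : m + (l + 1) = (m + 1) + l := by omega
    rw [this]
    rfl

lemma compRange_add (k : ℕ → ℕ) (l1 : ℕ) :
    ∀ l2 m w, compRange k m (l1 + l2) w = compRange k m l1 (compRange k (m + l1) l2 w) := by
  induction l1 with
  | zero => intro l2 m w; simp [compRange]
  | succ l1 ih =>
    intro l2 m w
    have h1 : l1 + 1 + l2 = (l1 + l2) + 1 := by omega
    rw [h1, compRange_succ_outer, compRange_succ_outer, ih]
    have : m + 1 + l1 = m + (l1 + 1) := by omega
    rw [this]

section Propag
variable {k : ℕ → ℕ} (hk : ∀ i, 1 ≤ i → 1 ≤ k i)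
include hk

lemma full_compRange (l : ℕ) :
    ∀ m w, 1 ≤ m → (0 : Fin 3) ∈ w → (1 : Fin 3) ∈ w → (2 : Fin 3) ∈ w →
      (0 : Fin 3) ∈ compRange k m l w ∧ (1 : Fin 3) ∈ compRange k m l w ∧
        (2 : Fin 3) ∈ compRange k m l w := by
  induction l with
  | zero => intro m w hm h0 h1 h2; exact ⟨h0, h1, h2⟩
  | succ l ih =>
    intro m w hm h0 h1 h2
    rw [compRange_succ_outer]
    have ⟨i0, i1, i2⟩ := ih (m + 1) w (by omega) h0 h1 h2
    exact ⟨mem0_of_mem1 (hk m hm) i1, mem1_of_mem0 i0, mem2_of_mem2 i2⟩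

lemma p02_compRange_even (t : ℕ) :
    ∀ m w, 1 ≤ m → (0 : Fin 3) ∈ w → (2 : Fin 3) ∈ w →
      (0 : Fin 3) ∈ compRange k m (2 * t) w ∧ (2 : Fin 3) ∈ compRange k m (2 * t) w := by
  induction t with
  | zero => intro m w hm h0 h2; exact ⟨h0, h2⟩
  | succ t ih =>
    intro m w hm h0 h2
    have h : 2 * (t + 1) = (2 * t) + 1 + 1 := by omega
    rw [h, compRange_succ_outer, compRange_succ_outer]
    have ⟨i0, i2⟩ := ih (m + 1 + 1) w (by omega) h0 h2
    exact ⟨mem0_of_mem1 (hk m hm) (mem1_of_mem0 i0),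
      mem2_of_mem2 (mem2_of_mem2 i2)⟩

lemma mem1_compRange_even (t : ℕ) :
    ∀ m w, 1 ≤ m → (1 : Fin 3) ∈ w → (1 : Fin 3) ∈ compRange k m (2 * t) w := by
  induction t with
  | zero => intro m w hm h1; exact h1
  | succ t ih =>
    intro m w hm h1
    have h : 2 * (t + 1) = (2 * t) + 1 + 1 := by omega
    rw [h, compRange_succ_outer, compRange_succ_outer]
    exact mem1_of_mem0 (mem0_of_mem1 (hk (m+1) (by omega)) (ih (m + 1 + 1) w (by omega) h1))

end Propag

lemma count_chiSub {K : ℕ} (hK : 1 ≤ K) (u a : Fin 3) :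
    (((chiSub K a).count u : ℤ)) = AmatZ K u a := by
  fin_cases a <;> fin_cases u <;>
    simp [chiSub, AmatZ, List.count_cons, List.count_replicate, List.count_singleton] <;>
    omega

lemma count_applyChi {K : ℕ} (hK : 1 ≤ K) (u : Fin 3) :
    ∀ w : List (Fin 3),
      ((applyChi K w).count u : ℤ) = ∑ t : Fin 3, AmatZ K u t * (w.count t : ℤ) := by
  intro w
  induction w with
  | nil => simp [applyChi]
  | cons a w ih =>
    have h : applyChi K (a :: w) = chiSub K a ++ applyChi K w := rfl
    rw [h, List.count_append]
    push_cast
    rw [ih, count_chiSub hK]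
    have : ∀ t : Fin 3, ((a :: w).count t : ℤ) = (w.count t : ℤ) + (if a = t then 1 else 0) := by
      intro t
      rcases eq_or_ne a t with h | h <;> simp [List.count_cons, h, eq_comm]
    simp only [this, mul_add, Finset.sum_add_distrib]
    have : ∑ t : Fin 3, AmatZ K u t * (if a = t then 1 else 0) = AmatZ K u a := by
      simp [mul_ite]
    rw [this]; ring

lemma count_compRange {k : ℕ → ℕ} (hk : ∀ i, 1 ≤ i → 1 ≤ k i) (l : ℕ) :
    ∀ m, 1 ≤ m → ∀ (w : List (Fin 3)) (u : Fin 3),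
      ((compRange k m l w).count u : ℤ) =
        ∑ v : Fin 3, (((List.range l).map fun i => AmatZ (k (m + i))).prod) u v * (w.count v : ℤ) := by
  induction l with
  | zero => intro m hm w u; simp [compRange, Matrix.one_apply, eq_comm]
  | succ l ih =>
    intro m hm w u
    rw [compRange_succ_outer, count_applyChi (hk m hm)]
    have hr : (List.range (l + 1)).map (fun i => AmatZ (k (m + i))) =
        AmatZ (k m) :: (List.range l).map fun i => AmatZ (k (m + 1 + i)) := by
      rw [List.range_succ_eq_map, List.map_cons, List.map_map]
      refine congrArg₂ List.cons (by simp) ?_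
      exact List.map_congr_left fun a _ => by
        simp only [Function.comp_apply]
        have h : m + (a + 1) = m + 1 + a := by omega
        rw [h]
    rw [hr, List.prod_cons]
    simp only [ih (m+1) (by omega) w]
    simp only [Matrix.mul_apply, Finset.sum_mul, Finset.mul_sum]
    rw [Finset.sum_comm]
    congr 1; ext t; congr 1; ext v; ring

lemma prod_entry_eq_count {k : ℕ → ℕ} (hk : ∀ i, 1 ≤ i → 1 ≤ k i) {m : ℕ} (hm : 1 ≤ m)
    (l : ℕ) (u v : Fin 3) :
    (((List.range l).map fun i => AmatZ (k (m + i))).prod) u v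
      = ((compRange k m l [v]).count u : ℤ) := by
  rw [count_compRange hk l m hm [v] u, Finset.sum_eq_single v]
  · simp
  · intro b _ hb
    have : [v].count b = 0 := by
      simp [List.count_cons, hb.symm]
    simp [this]
  · intro h; exact absurd (Finset.mem_univ v) h

lemma full_main {k : ℕ → ℕ} (hk : ∀ i, 1 ≤ i → 1 ≤ k i) {m o e c t2 t3 : ℕ}
    (hm : 1 ≤ m) (hmo : m ≤ o) (hoe : o < e) (hec : e < c)
    (ho : 2 ≤ k o) (he : 2 ≤ k e) (hc : 2 ≤ k c)
    (ht2 : e - o - 1 = 2 * t2) (ht3 : c - e - 1 = 2 * t3) (a : Fin 3) :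
    (0 : Fin 3) ∈ compRange k m (c - m + 1) [a] ∧
      (1 : Fin 3) ∈ compRange k m (c - m + 1) [a] ∧
      (2 : Fin 3) ∈ compRange k m (c - m + 1) [a] := by
  have hW : compRange k m (c - m + 1) [a] =
      compRange k m (o - m) (applyChi (k o)
        (compRange k (o + 1) (2 * t2) (applyChi (k e)
          (compRange k (e + 1) (2 * t3) (applyChi (k c) [a]))))) := by
    have h1 : c - m + 1 = (o - m) + (1 + (2 * t2 + (1 + (2 * t3 + 1)))) := by omega
    rw [h1, compRange_add, show m + (o - m) = o from by omega,
      compRange_add, compRange_add, compRange_add, compRange_add,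
      show o + 1 + 2 * t2 = e from by omega, show e + 1 + 2 * t3 = c from by omega]
    rfl
  rw [hW]
  set w1 := applyChi (k c) [a] with hw1
  have hkc1 : 1 ≤ k c := by omega
  have hke1 : 1 ≤ k e := by omega
  have hko1 : 1 ≤ k o := by omega
  rcases show (1 : Fin 3) ∈ w1 ∨ ((0 : Fin 3) ∈ w1 ∧ (2 : Fin 3) ∈ w1) by
      fin_cases a
      · exact Or.inl (mem1_of_mem0 (by simp))
      · exact Or.inr ⟨mem0_of_mem1 hkc1 (by simp), mem2_of_mem1 (by simp)⟩
      · exact Or.inr ⟨mem0_of_mem2 hc (by simp), mem2_of_mem2 (by simp)⟩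
    with h1 | h02
  · -- case: 1 ∈ w1 (a = 0)
    have h2 : (1 : Fin 3) ∈ compRange k (e + 1) (2 * t3) w1 :=
      mem1_compRange_even hk t3 (e + 1) w1 (by omega) h1
    have h3a : (0 : Fin 3) ∈ applyChi (k e) (compRange k (e + 1) (2 * t3) w1) :=
      mem0_of_mem1 hke1 h2
    have h3b : (2 : Fin 3) ∈ applyChi (k e) (compRange k (e + 1) (2 * t3) w1) :=
      mem2_of_mem1 h2
    have h4 := p02_compRange_even hk t2 (o + 1) _ (by omega) h3a h3b
    have h5a : (0 : Fin 3) ∈ applyChi (k o) (compRange k (o+1) (2*t2)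
        (applyChi (k e) (compRange k (e + 1) (2 * t3) w1))) := mem0_of_mem2 ho h4.2
    have h5b := mem1_of_mem0 (K := k o) h4.1
    have h5c := mem2_of_mem2 (K := k o) h4.2
    exact full_compRange hk (o - m) m _ hm h5a h5b h5c
  · -- case: 0,2 ∈ w1 (a = 1 or 2)
    have h2 := p02_compRange_even hk t3 (e + 1) w1 (by omega) h02.1 h02.2
    have h3a : (0 : Fin 3) ∈ applyChi (k e) (compRange k (e + 1) (2 * t3) w1) :=
      mem0_of_mem2 he h2.2
    have h3b := mem1_of_mem0 (K := k e) h2.1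
    have h3c := mem2_of_mem2 (K := k e) h2.2
    have h4 := full_compRange hk (2 * t2) (o + 1) _ (by omega) h3a h3b h3c
    have h5a := mem0_of_mem1 hko1 h4.2.1
    have h5b := mem1_of_mem0 (K := k o) h4.1
    have h5c := mem2_of_mem2 (K := k o) h4.2.2
    exact full_compRange hk (o - m) m _ hm h5a h5b h5c

/-- for a sequence of positive integers satisfying (★), for every `m ≥ 1`
there is `n ≥ m` such that every entry of `A_{k_m} ⋯ A_{k_n}` is strictly positive;
equivalently, for every letter `a`, the word `χ_{k_m} ∘ ⋯ ∘ χ_{k_n}(a)` contains every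
letter: the S-adic system is primitive. -/
theorem statement0 (k : ℕ → ℕ) (hpos : ∀ i, 1 ≤ i → 1 ≤ k i) (hstar : StarCond k) :
    ∀ m : ℕ, 1 ≤ m → ∃ n : ℕ, m ≤ n ∧
      (∀ u v : Fin 3,
        0 < (((List.range (n - m + 1)).map fun i => AmatZ (k (m + i))).prod) u v) ∧
      (∀ a b : Fin 3, b ∈ compRange k m (n - m + 1) [a]) := by
  intro m hm
  obtain ⟨i1, hi1, hko⟩ := hstar.2 m
  obtain ⟨i2, hi2, hke⟩ := hstar.1 (2 * i1)
  obtain ⟨i3, hi3, hkc⟩ := hstar.2 (2 * i2 + 1)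
  set o := 2 * i1 - 1 with hodef
  set e := 2 * i2 with hedef
  set c := 2 * i3 - 1 with hcdef
  have hmo : m ≤ o := by omega
  have hoe : o < e := by omega
  have hec : e < c := by omega
  have ht2 : e - o - 1 = 2 * (i2 - i1) := by omega
  have ht3 : c - e - 1 = 2 * (i3 - i2 - 1) := by omega
  have hfull := fun a => full_main hpos hm hmo hoe hec hko hke hkc ht2 ht3 a
  refine ⟨c, by omega, ?_, ?_⟩
  · intro u v
    have hlen : c - m + 1 = c - m + 1 := rfl
    rw [show c - m + 1 = c - m + 1 from rfl, prod_entry_eq_count hpos hm (c - m + 1) u v]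
    have hmem : u ∈ compRange k m (c - m + 1) [v] := by
      obtain ⟨f0, f1, f2⟩ := hfull v
      fin_cases u <;> assumption
    exact_mod_cast List.count_pos_iff.2 hmem
  · intro a b
    obtain ⟨f0, f1, f2⟩ := hfull a
    fin_cases b <;> assumption
end

section
/- Let (k_i)_{i≥1} be a sequence of positive integers satisfying condition (★). Then the subshift X contains no periodic point: there is no x ∈ X and no integer p ≥ 1 with σ^p(x) = x. -/
/-!
Desubstitution. Let `ρ_n` be the limit of `χ_{k_{n+1}} ∘ ⋯ ∘ χ_{k_{n+m}}(3)`, so that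
`ρ_n = χ_{k_{n+1}}(ρ_{n+1})` and `ρ_0 = ρ`. In a word `χ_K(y)` the letters other than `1` are
exactly the first letters of the blocks `χ_K(a)`, and for `K ≥ 1` the letter `a` can be read off
from the first letter and the length of its block. Hence a long factor of `χ_K(y)` of period `p`
comes from a long factor of `y` whose period `p'` is the number of blocks in one period, so
`p' ≤ p`. If `p' = p` all these blocks have length `1`; for `K ≥ 2` this means `y` has long runs
of the letter `1`, which is impossible when `y` is itself a `χ_{K'}`-image.

A periodic point of `X` gives `ρ_0` arbitrarily long factors of period `p`. Going up the tower
`ρ_0, ρ_1, …` the period never increases and drops at each of the infinitely many levels with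
`k_n ≥ 2`: a contradiction.
-/

open Filter Topology MeasureTheory

lemma one_le_length_chiSub (K : ℕ) (a : Fin 3) : 1 ≤ (chiSub K a).length := by
  fin_cases a <;> simp [chiSub]

lemma length_chiSub_le (K : ℕ) (a : Fin 3) : (chiSub K a).length ≤ K + 1 := by
  fin_cases a <;> simp [chiSub]

lemma eq_zero_of_length_chiSub_eq_one {K : ℕ} (hK : 2 ≤ K) {a : Fin 3}
    (h : (chiSub K a).length = 1) : a = 0 := by
  fin_cases a <;> simp [chiSub] at h ⊢ <;> omega

lemma chiSub_head_ne_zero (K : ℕ) (a : Fin 3) (h : 0 < (chiSub K a).length) :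
    (chiSub K a)[0] ≠ 0 := by
  fin_cases a <;> simp [chiSub]

lemma chiSub_getElem_eq_zero (K : ℕ) (a : Fin 3) {t : ℕ} (ht₀ : 0 < t)
    (ht : t < (chiSub K a).length) : (chiSub K a)[t] = 0 := by
  obtain ⟨t, rfl⟩ := Nat.exists_eq_add_of_lt ht₀
  fin_cases a <;> simp [chiSub] at ht ⊢

lemma chiSub_injective {K : ℕ} (hK : 1 ≤ K) : Function.Injective (chiSub K) := by
  intro a b h
  fin_cases a <;> fin_cases b <;> simp [chiSub] at h ⊢ <;> omega

lemma isPrefixSeq_iff {w : List (Fin 3)} {x : ℕ → Fin 3} :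
    IsPrefixSeq w x ↔ ∀ i (hi : i < w.length), w[i] = x i := by
  rw [IsPrefixSeq, List.ext_get_iff]
  simp

lemma IsPrefixSeq.of_prefix {v w : List (Fin 3)} {x : ℕ → Fin 3} (h : IsPrefixSeq w x)
    (hvw : v <+: w) : IsPrefixSeq v x := by
  rw [isPrefixSeq_iff] at h ⊢
  intro i hi
  rw [hvw.getElem hi, h]

lemma isPrefixSeq_ofFn (x : ℕ → Fin 3) (m : ℕ) :
    IsPrefixSeq (List.ofFn fun i : Fin m => x i) x := by
  simp [isPrefixSeq_iff]

lemma IsPrefixSeq.prefix_of_length_le {v w : List (Fin 3)} {x : ℕ → Fin 3}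
    (hv : IsPrefixSeq v x) (hw : IsPrefixSeq w x) (h : v.length ≤ w.length) : v <+: w := by
  rw [List.prefix_iff_eq_take]
  refine List.ext_getElem (by simp [h]) fun i hi _ => ?_
  rw [List.getElem_take, isPrefixSeq_iff.mp hv, isPrefixSeq_iff.mp hw]

lemma exists_isPrefixSeq {w : ℕ → List (Fin 3)} (hw : ∀ m m', m ≤ m' → w m <+: w m')
    (hlen : ∀ L, ∃ m, L < (w m).length) : ∃ x, ∀ m, IsPrefixSeq (w m) x := by
  choose M hM using hlen
  refine ⟨fun i => (w (M i))[i]'(hM i), fun m => isPrefixSeq_iff.mpr fun i hi => ?_⟩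
  rcases le_total m (M i) with h | h
  · exact (hw _ _ h).getElem hi
  · exact ((hw _ _ h).getElem (hM i)).symm

lemma eq_of_isPrefixSeq {w : ℕ → List (Fin 3)} (hlen : ∀ L, ∃ m, L < (w m).length)
    {x x' : ℕ → Fin 3} (hx : ∀ m, IsPrefixSeq (w m) x) (hx' : ∀ m, IsPrefixSeq (w m) x') :
    x = x' := by
  funext i
  obtain ⟨m, hm⟩ := hlen i
  rw [← isPrefixSeq_iff.mp (hx m) i hm, isPrefixSeq_iff.mp (hx' m) i hm]

lemma eq_of_periodicOn {α : Type*} {y : ℕ → α} {n L p : ℕ} {c : α} (hp : 0 < p)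
    (hper : ∀ i < L, y (n + i + p) = y (n + i)) (hc : ∀ i < p, y (n + i) = c) :
    ∀ i < L + p, y (n + i) = c := by
  intro i hi
  induction i using Nat.strong_induction_on with
  | _ i ih =>
    rcases lt_or_ge i p with hip | hpi
    · exact hc i hip
    · obtain ⟨i, rfl⟩ := Nat.exists_eq_add_of_le' hpi
      rw [← add_assoc, hper i (by omega)]
      exact ih i (by omega) (by omega)

def HasPeriodicFactors {α : Type*} (y : ℕ → α) (p : ℕ) : Prop :=
  ∀ L, ∃ n, ∀ i < L, y (n + i + p) = y (n + i)

lemma Finset.exists_forall_of_forall_exists_of_antitone {ι : Type*} {P : ι → ℕ → Prop}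
    (s : Finset ι) (hP : ∀ i ∈ s, Antitone (P i)) (h : ∀ L, ∃ i ∈ s, P i L) :
    ∃ i ∈ s, ∀ L, P i L := by
  obtain ⟨i, hi, hfreq⟩ := (s.frequently_exists (l := atTop)).mp (Frequently.of_forall h)
  refine ⟨i, hi, fun L => ?_⟩
  obtain ⟨L', hLL', hL'⟩ := frequently_atTop.mp hfreq L
  exact hP i hi hLL' hL'

lemma applyChi_append (K : ℕ) (u v : List (Fin 3)) :
    applyChi K (u ++ v) = applyChi K u ++ applyChi K v :=
  List.flatMap_append

section Blocks

variable {K : ℕ} {y' y : ℕ → Fin 3}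

def blockStart (K : ℕ) (y' : ℕ → Fin 3) (j : ℕ) : ℕ :=
  (applyChi K (List.ofFn fun i : Fin j => y' i)).length

/-- `y = χ_K(y')`. -/
def IsImage (K : ℕ) (y' y : ℕ → Fin 3) : Prop :=
  ∀ m, IsPrefixSeq (applyChi K (List.ofFn fun i : Fin m => y' i)) y

lemma applyChi_ofFn_succ (j : ℕ) :
    applyChi K (List.ofFn fun i : Fin (j + 1) => y' i) =
      applyChi K (List.ofFn fun i : Fin j => y' i) ++ chiSub K (y' j) := by
  rw [List.ofFn_succ_last, applyChi_append]
  simp [applyChi]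

@[simp] lemma blockStart_zero : blockStart K y' 0 = 0 := by
  simp [blockStart, applyChi]

lemma blockStart_succ (j : ℕ) :
    blockStart K y' (j + 1) = blockStart K y' j + (chiSub K (y' j)).length := by
  rw [blockStart, applyChi_ofFn_succ, List.length_append, blockStart]

lemma add_le_blockStart_add (K : ℕ) (y' : ℕ → Fin 3) (j r : ℕ) :
    blockStart K y' j + r ≤ blockStart K y' (j + r) := by
  induction r with
  | zero => rfl
  | succ r ih =>
    rw [← add_assoc j, blockStart_succ]
    have := one_le_length_chiSub K (y' (j + r))
    omega

lemma blockStart_add_le (K : ℕ) (y' : ℕ → Fin 3) (j r : ℕ) :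
    blockStart K y' (j + r) ≤ blockStart K y' j + (K + 1) * r := by
  induction r with
  | zero => simp
  | succ r ih =>
    rw [← add_assoc j, blockStart_succ, mul_add_one]
    have := length_chiSub_le K (y' (j + r))
    omega

lemma strictMono_blockStart (K : ℕ) (y' : ℕ → Fin 3) : StrictMono (blockStart K y') :=
  strictMono_nat_of_lt_succ fun j => add_le_blockStart_add K y' j 1

lemma exists_blockStart_le_lt (K : ℕ) (y' : ℕ → Fin 3) (q : ℕ) :
    ∃ j, blockStart K y' j ≤ q ∧ q < blockStart K y' (j + 1) := by
  obtain ⟨j, hj, hj'⟩ := (strictMono_blockStart K y').exists_between_of_tendsto_atTop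
    (strictMono_blockStart K y').tendsto_atTop (x := q + 1) (by simp)
  exact ⟨j, Nat.le_of_lt_succ hj, hj'⟩

lemma exists_blockStart_mem_Icc (K : ℕ) (y' : ℕ → Fin 3) (q : ℕ) :
    ∃ j, q ≤ blockStart K y' j ∧ blockStart K y' j ≤ q + K := by
  obtain ⟨j, hjq, hqj⟩ := exists_blockStart_le_lt K y' q
  rcases hjq.eq_or_lt with hj | hj
  · exact ⟨j, hj.ge, by omega⟩
  · have := blockStart_succ (K := K) (y' := y') j
    have := length_chiSub_le K (y' j)
    exact ⟨j + 1, hqj.le, by omega⟩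

lemma apply_eq_zero_of_blockStart_add_eq (hK : 2 ≤ K) {j p : ℕ}
    (h : blockStart K y' (j + p) = blockStart K y' j + p) {r : ℕ} (hr : r < p) :
    y' (j + r) = 0 := by
  refine eq_zero_of_length_chiSub_eq_one hK (le_antisymm ?_ (one_le_length_chiSub K _))
  have h₁ := add_le_blockStart_add K y' j r
  have h₂ := add_le_blockStart_add K y' (j + r + 1) (p - r - 1)
  rw [show j + r + 1 + (p - r - 1) = j + p by omega, blockStart_succ] at h₂
  omega

namespace IsImage

variable (hy : IsImage K y' y)
include hy

lemma apply_blockStart_add (j : ℕ) {t : ℕ} (ht : t < (chiSub K (y' j)).length) :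
    y (blockStart K y' j + t) = (chiSub K (y' j))[t] := by
  have h := isPrefixSeq_iff.mp (hy (j + 1)) (blockStart K y' j + t)
    (by rw [applyChi_ofFn_succ, List.length_append]; exact Nat.add_lt_add_left ht _)
  rw [← h, List.getElem_of_eq (applyChi_ofFn_succ j),
    List.getElem_append_right (by simp [blockStart])]
  simp [blockStart]

lemma apply_blockStart_ne_zero (j : ℕ) : y (blockStart K y' j) ≠ 0 := by
  have h := one_le_length_chiSub K (y' j)
  rw [← add_zero (blockStart K y' j), hy.apply_blockStart_add j h]
  exact chiSub_head_ne_zero K _ h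

lemma exists_blockStart_eq {q : ℕ} (hq : y q ≠ 0) : ∃ j, blockStart K y' j = q := by
  obtain ⟨j, hjq, hqj⟩ := exists_blockStart_le_lt K y' q
  refine ⟨j, by_contra fun hne => hq ?_⟩
  have ht : q - blockStart K y' j < (chiSub K (y' j)).length := by
    rw [blockStart_succ] at hqj; omega
  rw [← Nat.add_sub_of_le hjq, hy.apply_blockStart_add j ht]
  exact chiSub_getElem_eq_zero K _ (by omega) ht

lemma exists_ne_zero (q : ℕ) : ∃ t ≤ K, y (q + t) ≠ 0 := by
  obtain ⟨j, hqj, hjq⟩ := exists_blockStart_mem_Icc K y' q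
  exact ⟨blockStart K y' j - q, by omega, by
    rw [Nat.add_sub_of_le hqj]; exact hy.apply_blockStart_ne_zero j⟩

lemma chiSub_eq_of_forall_eq {j j' : ℕ}
    (h : ∀ d ≤ K + 1, y (blockStart K y' j' + d) = y (blockStart K y' j + d)) :
    chiSub K (y' j') = chiSub K (y' j) := by
  -- the length of a block is the distance from its start to the next nonzero letter
  have length_le : ∀ {j j' : ℕ},
      (∀ d ≤ K + 1, y (blockStart K y' j' + d) = y (blockStart K y' j + d)) →
      (chiSub K (y' j)).length ≤ (chiSub K (y' j')).length := by
    intro j j' h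
    by_contra! hlt
    have hne := hy.apply_blockStart_ne_zero (j' + 1)
    rw [blockStart_succ, h _ (length_chiSub_le K _), hy.apply_blockStart_add j hlt] at hne
    exact hne (chiSub_getElem_eq_zero K _ (one_le_length_chiSub K _) hlt)
  have hlen := le_antisymm (length_le fun d hd => (h d hd).symm) (length_le h)
  refine List.ext_getElem hlen fun t ht ht' => ?_
  rw [← hy.apply_blockStart_add j' ht, h t (by have := length_chiSub_le K (y' j'); omega),
    hy.apply_blockStart_add j ht']

-- The window holds `L` consecutive blocks, each of length `≤ K + 1`, starting within `K` of `n`.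
lemma exists_periodicOn_of_periodicOn (hK : 1 ≤ K) {n p : ℕ} (hp : 0 < p) (L : ℕ)
    (hper : ∀ i < (K + 1) * (L + 1), y (n + i + p) = y (n + i)) :
    ∃ p' ∈ Finset.Icc 1 p, ∃ n', (∀ i < L, y' (n' + i + p') = y' (n' + i)) ∧
      (2 ≤ K → p' = p → ∀ i < L, y' (n' + i) = 0) := by
  have per : ∀ q, n ≤ q → q < n + (K + 1) * (L + 1) → y (q + p) = y q := by
    intro q hnq hqL
    obtain ⟨i, rfl⟩ := Nat.exists_eq_add_of_le hnq
    exact hper i (by omega)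
  obtain ⟨j₀, hnj, hjn⟩ := exists_blockStart_mem_Icc K y' n
  have hS₀p : y (blockStart K y' j₀ + p) ≠ 0 := by
    rw [per _ hnj (by nlinarith)]
    exact hy.apply_blockStart_ne_zero j₀
  obtain ⟨j₁, hj₁⟩ := hy.exists_blockStart_eq hS₀p
  have hj : j₀ < j₁ := (strictMono_blockStart K y').lt_iff_lt.mp (by omega)
  obtain ⟨p', rfl⟩ := Nat.exists_eq_add_of_le hj.le
  have hp' : p' ≤ p := by
    have := add_le_blockStart_add K y' j₀ p'
    omega
  have letter : ∀ r < L, blockStart K y' (j₀ + r + p') = blockStart K y' (j₀ + r) + p →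
      y' (j₀ + r + p') = y' (j₀ + r) := by
    intro r hr hS
    refine chiSub_injective hK (hy.chiSub_eq_of_forall_eq fun d hd => ?_)
    have h₁ := (strictMono_blockStart K y').monotone (Nat.le_add_right j₀ r)
    have h₂ := blockStart_add_le K y' j₀ r
    have h₃ : (K + 1) * (r + 1) ≤ (K + 1) * L := Nat.mul_le_mul_left _ hr
    rw [hS, add_right_comm, per _ (by omega) (by nlinarith)]
  have start : ∀ r ≤ L, blockStart K y' (j₀ + r + p') = blockStart K y' (j₀ + r) + p := by
    intro r hr
    induction r with
    | zero => simpa using hj₁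
    | succ r ih =>
      have ih := ih (by omega)
      rw [show j₀ + (r + 1) + p' = j₀ + r + p' + 1 by omega, ← add_assoc j₀,
        blockStart_succ, blockStart_succ, ih, letter r (by omega) ih, add_right_comm]
  have periodic : ∀ i < L, y' (j₀ + i + p') = y' (j₀ + i) := fun i hi =>
    letter i hi (start i hi.le)
  refine ⟨p', Finset.mem_Icc.mpr ⟨by omega, hp'⟩, j₀, periodic, ?_⟩
  rintro hK₂ rfl i hi
  exact eq_of_periodicOn hp periodic
    (fun r hr => apply_eq_zero_of_blockStart_add_eq hK₂ hj₁ hr) i (by omega)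

lemma hasPeriodicFactors (hK : 1 ≤ K) {p : ℕ} (hp : 0 < p) (h : HasPeriodicFactors y p) :
    ∃ p' ∈ Finset.Icc 1 p, HasPeriodicFactors y' p' ∧
      (2 ≤ K → p' = p → ∀ L, ∃ n, ∀ i < L, y' (n + i) = 0) := by
  obtain ⟨p', hp', hfactors⟩ := Finset.exists_forall_of_forall_exists_of_antitone
    (P := fun p' L => ∃ n, (∀ i < L, y' (n + i + p') = y' (n + i)) ∧
      (2 ≤ K → p' = p → ∀ i < L, y' (n + i) = 0))
    (Finset.Icc 1 p)
    (fun _ _ L L' hLL' ⟨n, hper, hzero⟩ =>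
      ⟨n, fun i hi => hper i (by omega), fun hK₂ heq i hi => hzero hK₂ heq i (by omega)⟩)
    (fun L => let ⟨n, hn⟩ := h ((K + 1) * (L + 1))
      hy.exists_periodicOn_of_periodicOn hK hp L hn)
  refine ⟨p', hp', fun L => (hfactors L).imp fun _ => And.left, fun hK₂ heq L => ?_⟩
  obtain ⟨n, -, hzero⟩ := hfactors L
  exact ⟨n, hzero hK₂ heq⟩

lemma exists_lt_hasPeriodicFactors {K' : ℕ} {y'' : ℕ → Fin 3} (hy' : IsImage K' y'' y')
    (hK : 2 ≤ K) {p : ℕ} (hp : 0 < p) (h : HasPeriodicFactors y p) :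
    ∃ p', 0 < p' ∧ p' < p ∧ HasPeriodicFactors y' p' := by
  obtain ⟨p', hp', hfactors, hzero⟩ := hy.hasPeriodicFactors (by omega) hp h
  rw [Finset.mem_Icc] at hp'
  rcases hp'.2.lt_or_eq with hlt | rfl
  · exact ⟨p', hp'.1, hlt, hfactors⟩
  · obtain ⟨n, hn⟩ := hzero hK rfl (K' + 1)
    obtain ⟨t, ht, hne⟩ := hy'.exists_ne_zero n
    exact absurd (hn t (by omega)) hne

end IsImage

end Blocks

theorem not_hasPeriodicFactors_of_isImage (Y : ℕ → ℕ → Fin 3) (k : ℕ → ℕ)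
    (hpos : ∀ i, 1 ≤ i → 1 ≤ k i) (hk : ∃ᶠ i in atTop, 1 < k i)
    (hY : ∀ n, IsImage (k (n + 1)) (Y (n + 1)) (Y n)) {p : ℕ} (hp : 0 < p) (n : ℕ) :
    ¬ HasPeriodicFactors (Y n) p := by
  induction p using Nat.strong_induction_on generalizing n with
  | _ p ih =>
  intro h
  have descend : ∀ d, ∃ p' ∈ Finset.Icc 1 p, HasPeriodicFactors (Y (n + d)) p' := by
    intro d
    induction d with
    | zero => exact ⟨p, Finset.mem_Icc.mpr ⟨hp, le_rfl⟩, h⟩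
    | succ d ihd =>
      obtain ⟨p', hp', h'⟩ := ihd
      rw [Finset.mem_Icc] at hp'
      obtain ⟨p'', hp'', h'', -⟩ := (hY (n + d)).hasPeriodicFactors (hpos _ (by omega)) hp'.1 h'
      rw [Finset.mem_Icc] at hp''
      exact ⟨p'', Finset.mem_Icc.mpr ⟨hp''.1, hp''.2.trans hp'.2⟩, h''⟩
  obtain ⟨i, hi, hki⟩ := frequently_atTop.mp hk (n + 1)
  obtain ⟨d, rfl⟩ := Nat.exists_eq_add_of_le hi
  obtain ⟨p', hp', h'⟩ := descend d
  rw [Finset.mem_Icc] at hp'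
  obtain ⟨p'', hp''₀, hp''p', h''⟩ := (hY (n + d)).exists_lt_hasPeriodicFactors
    (hY (n + d + 1)) (by rwa [add_right_comm] at hki) hp'.1 h'
  exact ih p'' (by omega) hp''₀ _ h''

lemma compApply_append (k : ℕ → ℕ) (m : ℕ) (u v : List (Fin 3)) :
    compApply k m (u ++ v) = compApply k m u ++ compApply k m v := by
  induction m generalizing u v with
  | zero => rfl
  | succ m ih => rw [compApply, applyChi_append, ih]; rfl

lemma length_le_length_compApply (k : ℕ → ℕ) (m : ℕ) (w : List (Fin 3)) :
    w.length ≤ (compApply k m w).length := by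
  induction m generalizing w with
  | zero => rfl
  | succ m ih =>
    refine le_trans ?_ (ih _)
    rw [applyChi, List.length_flatMap]
    calc w.length = (w.map fun _ => 1).sum := by simp
      _ ≤ _ := List.sum_le_sum fun a _ => one_le_length_chiSub _ a

lemma compApply_succ' (k : ℕ → ℕ) (m : ℕ) (w : List (Fin 3)) :
    compApply k (m + 1) w = applyChi (k 1) (compApply (fun i => k (i + 1)) m w) := by
  induction m generalizing w with
  | zero => rfl
  | succ m ih => exact ih _

lemma compApply_succ_singleton (k : ℕ → ℕ) (m : ℕ) :
    compApply k (m + 1) [2] =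
      compApply k m [2] ++ compApply k m (List.replicate (k (m + 1) - 1) 0) := by
  rw [compApply, ← compApply_append]
  simp [applyChi, chiSub]

lemma compApply_singleton_prefix (k : ℕ → ℕ) {m m' : ℕ} (h : m ≤ m') :
    compApply k m [2] <+: compApply k m' [2] := by
  induction m', h using Nat.le_induction with
  | base => exact List.prefix_refl _
  | succ m' _ ih => exact ih.trans (compApply_succ_singleton k m' ▸ List.prefix_append _ _)

lemma exists_lt_length_compApply_singleton {k : ℕ → ℕ} (hk : ∃ᶠ i in atTop, 1 < k i)
    (L : ℕ) : ∃ m, L < (compApply k m [2]).length := by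
  induction L with
  | zero => exact ⟨0, by simp [compApply]⟩
  | succ L ih =>
    obtain ⟨m, hm⟩ := ih
    obtain ⟨i, hi, hki⟩ := frequently_atTop.mp hk (m + 1)
    obtain ⟨i, rfl⟩ := Nat.exists_eq_add_of_le' (show 1 ≤ i by omega)
    refine ⟨i + 1, ?_⟩
    have h₁ := (compApply_singleton_prefix k (show m ≤ i by omega)).length_le
    have h₂ := length_le_length_compApply k i (List.replicate (k (i + 1) - 1) 0)
    rw [compApply_succ_singleton, List.length_append]
    rw [List.length_replicate] at h₂
    omega

lemma exists_isImage_tower {k : ℕ → ℕ} (hk : ∃ᶠ i in atTop, 1 < k i) {ρ : ℕ → Fin 3}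
    (hρ : ∀ m, IsPrefixSeq (compApply k m [2]) ρ) :
    ∃ Y : ℕ → ℕ → Fin 3, Y 0 = ρ ∧ ∀ n, IsImage (k (n + 1)) (Y (n + 1)) (Y n) := by
  have hlen : ∀ n L, ∃ m, L < (compApply (fun i => k (i + n)) m [2]).length := fun n =>
    exists_lt_length_compApply_singleton <| frequently_atTop.mpr fun a => by
      obtain ⟨b, hab, hb⟩ := frequently_atTop.mp hk (a + n)
      exact ⟨b - n, by omega, by rwa [Nat.sub_add_cancel (by omega)]⟩
  choose Y hY using fun n =>
    exists_isPrefixSeq (fun m m' => compApply_singleton_prefix (fun i => k (i + n))) (hlen n)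
  refine ⟨Y, eq_of_isPrefixSeq (hlen 0) (hY 0) hρ, fun n m => ?_⟩
  obtain ⟨M, hM⟩ := hlen (n + 1) m
  have hpre := (isPrefixSeq_ofFn (Y (n + 1)) m).prefix_of_length_le (hY (n + 1) M)
    (by simpa using hM.le)
  refine (hY n (M + 1)).of_prefix ?_
  rw [compApply_succ']
  simp only [add_assoc, add_comm 1 n]
  exact hpre.flatMap _

lemma shift_iterate_apply (p : ℕ) (x : ℕ → Fin 3) (i : ℕ) : shift^[p] x i = x (i + p) := by
  induction p generalizing x with
  | zero => rfl
  | succ p ih => rw [Function.iterate_succ_apply, ih, shift, add_assoc]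

lemma hasPeriodicFactors_of_mem_orbitClosure {ρ x : ℕ → Fin 3} (hx : x ∈ orbitClosure ρ)
    {p : ℕ} (hper : ∀ i, x (i + p) = x i) : HasPeriodicFactors ρ p := by
  intro L
  have hU : IsOpen ((Finset.range (L + p) : Set ℕ).pi fun i => {x i}) :=
    isOpen_set_pi (Finset.finite_toSet _) fun _ _ => isOpen_discrete _
  obtain ⟨_, hz, ⟨n, rfl⟩⟩ := mem_closure_iff.mp hx _ hU (by simp)
  simp only [Set.mem_pi, Finset.coe_range, Set.mem_Iio, Set.mem_singleton_iff] at hz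
  refine ⟨n, fun i hi => ?_⟩
  rw [show n + i + p = i + p + n by omega, add_comm n i, hz _ (by omega), hz _ (by omega), hper]

/-- for a sequence of positive integers satisfying (★), the subshift `X`
(the orbit closure of the limit `ρ` of the words `χ_{k_1} ∘ ⋯ ∘ χ_{k_n}(3)`) contains
no periodic point: there is no `x ∈ X` and `p ≥ 1` with `σ^p(x) = x`. -/
theorem statement1 (k : ℕ → ℕ) (hpos : ∀ i, 1 ≤ i → 1 ≤ k i) (hstar : StarCond k)
    (ρ : ℕ → Fin 3) (hρ : ∀ n : ℕ, IsPrefixSeq (compApply k n [2]) ρ) :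
    ∀ x ∈ orbitClosure ρ, ∀ p : ℕ, 1 ≤ p → shift^[p] x ≠ x := by
  intro x hx p hp hper
  have hk : ∃ᶠ i in atTop, 1 < k i := frequently_atTop.mpr fun N =>
    let ⟨i, hi, hki⟩ := hstar.1 N
    ⟨2 * i, by omega, hki⟩
  obtain ⟨Y, rfl, hY⟩ := exists_isImage_tower hk hρ
  refine not_hasPeriodicFactors_of_isImage Y k hpos hk hY hp 0
    (hasPeriodicFactors_of_mem_orbitClosure hx fun i => ?_)
  rw [← shift_iterate_apply p x, hper]
end

section
/- Let (X,σ) be an S-adic subshift based on substitutions χ_i : A_i → A_{i-1}^+ such that each χ_i is injective on letters, each χ_i is combinatorially recognizable (for the subshift based on (χ_j)_{j>i}), and for every n ∈ ℕ there exists m > n such that |χ_n∘χ_{n+1}∘⋯∘χ_m(a)| > 1 for every a ∈ A_m. Then (X,σ) is aperiodic: there is no x ∈ X and no integer p ≥ 1 with σ^p(x) = x. -/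
open Filter Topology

variable {A : ℕ → Type}

/-- `downFrom chi i n` applies `χ_{i+1} ∘ χ_{i+2} ∘ ⋯ ∘ χ_{i+n}` (in the indexing where
`chi i : A (i+1) → List (A i)` is the substitution `χ_{i+1} : A_{i+1} → A_i⁺`),
extended to words by concatenation. -/
def downFrom (chi : (i : ℕ) → A (i + 1) → List (A i)) (i : ℕ) :
    (n : ℕ) → List (A (i + n)) → List (A i)
  | 0, w => w
  | n + 1, w => downFrom chi i n (w.flatMap (chi (i + n)))

/-- The language at level `i`: words over `A i` occurring in some image
`χ_{i+1} ∘ ⋯ ∘ χ_{i+n}(a)`. -/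
def lang (chi : (i : ℕ) → A (i + 1) → List (A i)) (i : ℕ) : Set (List (A i)) :=
  {v | ∃ (n : ℕ) (a : A (i + n)), v <:+: downFrom chi i n [a]}

/-- A sequence `x ∈ A_0^ℕ` each of whose finite prefixes is a prefix of some
`χ_1 ∘ ⋯ ∘ χ_n(a)`. -/
def goodSeq (chi : (i : ℕ) → A (i + 1) → List (A i)) (x : ℕ → A 0) : Prop :=
  ∀ m : ℕ, ∃ (n : ℕ) (a : A (0 + n)),
    (List.ofFn fun i : Fin m => x i) <+: downFrom chi 0 n [a]

/-- The S-adic subshift: the closure of the union of the shift orbits of all good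
sequences. -/
def sadicX [TopologicalSpace (A 0)] (chi : (i : ℕ) → A (i + 1) → List (A i)) :
    Set (ℕ → A 0) :=
  closure {y | ∃ x : ℕ → A 0, goodSeq chi x ∧ ∃ j : ℕ, y = fun i => x (i + j)}

/-- The set of positions in `χ(v)` where an image `χ(v_{j+1})` of a letter of `v`
starts (`j = 0` corresponding to the start of `χ(v)`). -/
def cutPoints (chi : (i : ℕ) → A (i + 1) → List (A i)) (i : ℕ)
    (v : List (A (i + 1))) : Set ℕ :=
  {p | ∃ j < v.length, p = ((v.take j).flatMap (chi i)).length}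

/-- The set of positions at which `w` occurs in `u`. -/
def occSet {α : Type*} (w u : List α) : Set ℕ := {p | w <+: u.drop p}

/-- The substitution `chi i : A (i+1) → List (A i)` is combinatorially recognizable
(for the subshift based on the later substitutions): there is `N` such that for every
word `w` of length `≥ N` in the level-`i` language and every `v` in the level-`(i+1)`
language, if `w` appears twice in `χ(v)` then the first appearance starts at a cut
point iff the second one does. -/
def CombRecognizable (chi : (i : ℕ) → A (i + 1) → List (A i)) (i : ℕ) : Prop :=
  ∃ N : ℕ, ∀ w : List (A i), N ≤ w.length → w ∈ lang chi i →
    ∀ v ∈ lang chi (i + 1), ∀ p₁ p₂ : ℕ,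
      IsLeast (occSet w (v.flatMap (chi i))) p₁ →
      IsLeast {p ∈ occSet w (v.flatMap (chi i)) | p₁ < p} p₂ →
      (p₁ ∈ cutPoints chi i v ↔ p₂ ∈ cutPoints chi i v)

section ListAux

variable {α : Type*} {β : Type*}

/-- `k`-th power of a word. -/
def pw (u : List α) (k : ℕ) : List α := (List.replicate k u).flatten

@[simp] lemma pw_zero (u : List α) : pw u 0 = [] := rfl

lemma pw_succ (u : List α) (k : ℕ) : pw u (k+1) = u ++ pw u k := by
  simp [pw, List.replicate_succ]

lemma pw_succ' (u : List α) (k : ℕ) : pw u (k+1) = pw u k ++ u := by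
  simp [pw, List.replicate_succ']

@[simp] lemma length_pw (u : List α) (k : ℕ) : (pw u k).length = k * u.length := by
  induction k with
  | zero => simp
  | succ k ih => rw [pw_succ]; simp [ih]; ring

lemma pw_getElem (u : List α) (k m : ℕ) (hu : u ≠ []) (hm : m < (pw u k).length) :
    (pw u k)[m] = u[m % u.length]'(Nat.mod_lt _ (List.length_pos_iff.2 hu)) := by
  induction k generalizing m with
  | zero => simp [pw] at hm
  | succ k ih =>
    have hm' : m < (u ++ pw u k).length := by rw [← pw_succ]; exact hm
    rw [List.getElem_of_eq (pw_succ u k) hm]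
    by_cases h : m < u.length
    · rw [List.getElem_append_left h]
      congr 1
      exact (Nat.mod_eq_of_lt h).symm
    · push_neg at h
      have hm2 : m - u.length < (pw u k).length := by
        simp only [List.length_append] at hm'; omega
      rw [List.getElem_append_right h, ih _ hm2]
      congr 1
      exact (Nat.mod_eq_sub_mod h).symm

/-- `seg l q n` : the length-`n` subword of `l` starting at position `q`. -/
def seg (l : List α) (q n : ℕ) : List α := (l.drop q).take n

lemma length_seg (l : List α) {q n : ℕ} (h : q + n ≤ l.length) : (seg l q n).length = n := by
  simp [seg]; omega

lemma seg_getElem (l : List α) {q n m : ℕ} (h : m < (seg l q n).length)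
    (h' : q + m < l.length) : (seg l q n)[m] = l[q + m] := by
  simp only [seg] at h ⊢
  rw [List.getElem_take, List.getElem_drop]

lemma seg_prefix_drop (l : List α) (q n : ℕ) : seg l q n <+: l.drop q :=
  List.take_prefix _ _

lemma seg_infix (l : List α) (q n : ℕ) : seg l q n <:+: l :=
  (seg_prefix_drop l q n).isInfix.trans (List.drop_suffix q l).isInfix

lemma eq_seg {l w : List α} {q n : ℕ} (h : w <+: l.drop q) (hl : w.length = n) :
    w = seg l q n := by
  rw [List.prefix_iff_eq_take] at h
  rw [seg, ← hl]; exact h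

lemma seg_drop (l : List α) (t q n : ℕ) : seg (l.drop t) q n = seg l (t + q) n := by
  simp only [seg, List.drop_drop]
  try rw [Nat.add_comm q t]

lemma seg_append_left {Y : List α} (Z : List α) {q n : ℕ} (h : q + n ≤ Y.length) :
    seg (Y ++ Z) q n = seg Y q n := by
  apply List.ext_getElem
  · rw [length_seg _ (by simp; omega), length_seg _ h]
  · intro m h1 h2
    have hm : m < n := by rwa [length_seg _ h] at h2
    rw [seg_getElem _ h1 (by simp; omega), seg_getElem _ h2 (by omega)]
    exact List.getElem_append_left (show q + m < Y.length by omega)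

lemma seg_append_right (Y : List α) (Z : List α) (r n : ℕ) :
    seg (Y ++ Z) (Y.length + r) n = seg Z r n := by
  simp [seg, List.drop_append, List.drop_of_length_le (show Y.length ≤ Y.length + r by omega)]

/-- shift-invariance of segments of powers. -/
lemma seg_pw_shift {u : List α} (hu : u ≠ []) {k q n : ℕ}
    (h : q + n + u.length ≤ k * u.length) :
    seg (pw u k) q n = seg (pw u k) (q + u.length) n := by
  have hlen : (pw u k).length = k * u.length := length_pw u k
  apply List.ext_getElem
  · rw [length_seg _ (by omega), length_seg _ (by omega)]
  · intro m h1 h2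
    have hm : m < n := by rwa [length_seg _ (by omega)] at h1
    rw [seg_getElem _ h1 (by omega), seg_getElem _ h2 (by omega)]
    rw [pw_getElem u k _ hu (by omega), pw_getElem u k _ hu (by omega)]
    congr 1
    rw [show q + u.length + m = (q + m) + u.length by ring, Nat.add_mod_right]

/-- a full-period window of a power is a permutation of the period block. -/
lemma seg_pw_perm {u : List α} (hu : u ≠ []) {k s : ℕ}
    (h : s + u.length ≤ k * u.length) :
    (seg (pw u k) s u.length).Perm u := by
  have hlen : (pw u k).length = k * u.length := length_pw u k
  have hrot : seg (pw u k) s u.length = u.rotate (s % u.length) := by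
    apply List.ext_getElem
    · rw [length_seg _ (by omega), List.length_rotate]
    · intro m h1 h2
      have hm : m < u.length := by rwa [length_seg _ (by omega)] at h1
      rw [seg_getElem _ h1 (by omega), List.getElem_rotate]
      rw [pw_getElem u k _ hu (by omega)]
      congr 1
      have h5 : (m + s % u.length) % u.length = (m + s) % u.length :=
        (Nat.mod_modEq s u.length).add_left m
      rw [h5, Nat.add_comm m s]
  rw [hrot]
  exact List.rotate_perm u _

end ListAux

section ChiAux

variable {A : ℕ → Type} (chi : (i : ℕ) → A (i + 1) → List (A i))

/-- total length of the image of a letter at level `i` down at level `0`. -/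
def wt : (i : ℕ) → A i → ℕ
  | 0, _ => 1
  | (i+1), a => ((chi i a).map (wt i)).sum

lemma wt_succ (i : ℕ) (a : A (i+1)) : wt chi (i+1) a = ((chi i a).map (wt chi i)).sum := rfl

lemma list_card_mul_le_sum {l : List ℕ} {c : ℕ} (h : ∀ x ∈ l, c ≤ x) :
    l.length * c ≤ l.sum := by
  induction l with
  | nil => simp
  | cons a t ih =>
    have ha := h a (by simp)
    have := ih (fun x hx => h x (by simp [hx]))
    simp only [List.length_cons, List.sum_cons]
    nlinarith

lemma wt_pos (hne : ∀ i a, chi i a ≠ []) : ∀ (i : ℕ) (a : A i), 1 ≤ wt chi i a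
  | 0, _ => le_refl 1
  | (i+1), a => by
    rw [wt_succ]
    cases h : chi i a with
    | nil => exact absurd h (hne i a)
    | cons b t =>
      have hb : 1 ≤ wt chi i b := wt_pos hne i b
      simp only [List.map_cons, List.sum_cons]
      omega

/-- cut position: length of the image of the first `j` letters. -/
def cl (i : ℕ) (v : List (A (i+1))) (j : ℕ) : ℕ := ((v.take j).flatMap (chi i)).length

@[simp] lemma cl_zero (i : ℕ) (v : List (A (i+1))) : cl chi i v 0 = 0 := rfl

lemma cl_of_le (i : ℕ) {v : List (A (i+1))} {j : ℕ} (h : v.length ≤ j) :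
    cl chi i v j = (v.flatMap (chi i)).length := by
  unfold cl; rw [List.take_of_length_le h]

lemma cl_add (i : ℕ) (v : List (A (i+1))) (j e : ℕ) :
    cl chi i v (j + e) = cl chi i v j + cl chi i (v.drop j) e := by
  unfold cl
  rw [List.take_add, List.flatMap_append, List.length_append]

lemma flatMap_ne_nil (hne : ∀ i a, chi i a ≠ []) {i : ℕ} {l : List (A (i+1))}
    (h : l ≠ []) : 0 < (l.flatMap (chi i)).length := by
  cases l with
  | nil => exact absurd rfl h
  | cons a t =>
    have := hne i a
    simp only [List.flatMap_cons, List.length_append]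
    have : 0 < (chi i a).length := List.length_pos_iff.2 this
    omega

lemma cl_strict (hne : ∀ i a, chi i a ≠ []) (i : ℕ) {v : List (A (i+1))} {j j' : ℕ}
    (h : j < j') (h2 : j' ≤ v.length) : cl chi i v j < cl chi i v j' := by
  have := cl_add chi i v j (j' - j)
  rw [show j + (j' - j) = j' by omega] at this
  have hmid : ((v.drop j).take (j' - j)) ≠ [] := by
    have : 0 < ((v.drop j).take (j' - j)).length := by
      rw [List.length_take, List.length_drop]; omega
    exact List.length_pos_iff.1 this
  have := flatMap_ne_nil chi hne hmid
  have hcl : cl chi i (v.drop j) (j' - j) = (((v.drop j).take (j' - j)).flatMap (chi i)).length := rfl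
  omega

lemma cl_mono (i : ℕ) (v : List (A (i+1))) {j j' : ℕ} (h : j ≤ j') :
    cl chi i v j ≤ cl chi i v j' := by
  have := cl_add chi i v j (j' - j)
  rw [show j + (j' - j) = j' by omega] at this
  omega

lemma cl_le_total (i : ℕ) (v : List (A (i+1))) (j : ℕ) :
    cl chi i v j ≤ (v.flatMap (chi i)).length := by
  rcases le_or_gt v.length j with h | h
  · rw [cl_of_le chi i h]
  · rw [← cl_of_le chi i (le_refl v.length)]
    exact cl_mono chi i v (le_of_lt h)

lemma lt_length_of_cl_lt (hne : ∀ i a, chi i a ≠ []) (i : ℕ) {v : List (A (i+1))} {j : ℕ}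
    (h : cl chi i v j < (v.flatMap (chi i)).length) : j < v.length := by
  by_contra hc
  push_neg at hc
  rw [cl_of_le chi i hc] at h
  omega

lemma cl_inj (hne : ∀ i a, chi i a ≠ []) (i : ℕ) {v : List (A (i+1))} {j j' : ℕ}
    (hj : j ≤ v.length) (hj' : j' ≤ v.length) (h : cl chi i v j = cl chi i v j') : j = j' := by
  rcases lt_trichotomy j j' with hlt | heq | hgt
  · exact absurd h (by have := cl_strict chi hne i hlt hj'; omega)
  · exact heq
  · exact absurd h (by have := cl_strict chi hne i hgt hj; omega)

lemma cl_succ (i : ℕ) {v : List (A (i+1))} {j : ℕ} (h : j < v.length) :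
    cl chi i v (j+1) = cl chi i v j + (chi i (v[j])).length := by
  rw [cl_add chi i v j 1]
  congr 1
  have h1 : (v.drop j).take 1 = [v[j]] := List.take_one_drop_eq_of_lt_length h
  unfold cl
  rw [h1]
  simp

lemma flatMap_drop (i : ℕ) (v : List (A (i+1))) (j : ℕ) :
    (v.drop j).flatMap (chi i) = (v.flatMap (chi i)).drop (cl chi i v j) := by
  have h0 : v.flatMap (chi i) = (v.take j).flatMap (chi i) ++ (v.drop j).flatMap (chi i) := by
    rw [← List.flatMap_append, List.take_append_drop]
  rw [h0]
  exact List.drop_left.symm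

lemma flatMap_take (i : ℕ) (v : List (A (i+1))) (j : ℕ) :
    (v.take j).flatMap (chi i) = (v.flatMap (chi i)).take (cl chi i v j) := by
  have h0 : v.flatMap (chi i) = (v.take j).flatMap (chi i) ++ (v.drop j).flatMap (chi i) := by
    rw [← List.flatMap_append, List.take_append_drop]
  rw [h0]
  exact List.take_left.symm

lemma flatMap_seg (i : ℕ) (v : List (A (i+1))) (j δ : ℕ) :
    (seg v j δ).flatMap (chi i)
      = seg (v.flatMap (chi i)) (cl chi i v j) (cl chi i v (j + δ) - cl chi i v j) := by
  unfold seg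
  rw [flatMap_take chi i (v.drop j) δ, flatMap_drop chi i v j]
  have h2 : cl chi i (v.drop j) δ = cl chi i v (j + δ) - cl chi i v j := by
    have := cl_add chi i v j δ; omega
  rw [h2]

lemma chunk_eq (i : ℕ) {v : List (A (i+1))} {j : ℕ} (h : j < v.length) :
    chi i (v[j]) = seg (v.flatMap (chi i)) (cl chi i v j) ((chi i (v[j])).length) := by
  have h1 : (v.flatMap (chi i)).drop (cl chi i v j) = chi i (v[j]) ++ (v.drop (j+1)).flatMap (chi i) := by
    rw [← flatMap_drop chi i v j]
    conv_lhs => rw [List.drop_eq_getElem_cons h]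
    rw [List.flatMap_cons]
  rw [seg, h1]
  exact List.take_left.symm

lemma mem_cutPoints_iff {i : ℕ} {v : List (A (i+1))} {c : ℕ} :
    c ∈ cutPoints chi i v ↔ ∃ j, j < v.length ∧ c = cl chi i v j := Iff.rfl

lemma zero_mem_cutPoints {i : ℕ} {v : List (A (i+1))} (h : v ≠ []) :
    0 ∈ cutPoints chi i v := ⟨0, List.length_pos_iff.2 h, rfl⟩

lemma cut_lt_total (hne : ∀ i a, chi i a ≠ []) {i : ℕ} {v : List (A (i+1))} {c : ℕ}
    (h : c ∈ cutPoints chi i v) : c < (v.flatMap (chi i)).length := by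
  obtain ⟨j, hj, rfl⟩ := h
  rw [← cl_of_le chi i (le_refl v.length)]
  exact cl_strict chi hne i hj (le_refl _)

lemma cut_drop_iff (hne : ∀ i a, chi i a ≠ []) {i : ℕ} {v : List (A (i+1))} {j₀ : ℕ}
    (hj : j₀ ≤ v.length) (s : ℕ) :
    s ∈ cutPoints chi i (v.drop j₀) ↔ cl chi i v j₀ + s ∈ cutPoints chi i v := by
  constructor
  · rintro ⟨j', hj', rfl⟩
    refine ⟨j₀ + j', ?_, ?_⟩
    · rw [List.length_drop] at hj'
      omega
    · show cl chi i v j₀ + cl chi i (v.drop j₀) j' = cl chi i v (j₀ + j')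
      rw [cl_add]
  · rintro ⟨j₁, hj₁, heq⟩
    have heq' : cl chi i v j₀ + s = cl chi i v j₁ := heq
    have hj₀j₁ : j₀ ≤ j₁ := by
      by_contra hc
      push_neg at hc
      have := cl_strict chi hne i hc hj
      omega
    have hadd := cl_add chi i v j₀ (j₁ - j₀)
    rw [show j₀ + (j₁ - j₀) = j₁ by omega] at hadd
    refine ⟨j₁ - j₀, by rw [List.length_drop]; omega, ?_⟩
    show s = cl chi i (v.drop j₀) (j₁ - j₀)
    omega

lemma lang_infix {i : ℕ} {w w' : List (A i)} (h : w' <:+: w) (hw : w ∈ lang chi i) :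
    w' ∈ lang chi i := by
  obtain ⟨n, a, h2⟩ := hw
  exact ⟨n, a, h.trans h2⟩

end ChiAux

section DownAux

variable {A : ℕ → Type} (chi : (i : ℕ) → A (i + 1) → List (A i))

lemma heq_flatMap {j j' : ℕ} (h : j = j') (z : List (A (j+1))) (z' : List (A (j'+1)))
    (hz : HEq z z') : HEq (z.flatMap (chi j)) (z'.flatMap (chi j')) := by
  subst h
  rw [eq_of_heq hz]

lemma heq_single {j j' : ℕ} (h : j = j') (a : A j) :
    HEq ([a] : List (A j)) ([h ▸ a] : List (A j')) := by
  subst h; rfl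

lemma down_eq : ∀ (m i : ℕ) (z : List (A (i + m + 1))) (z' : List (A (i + 1 + m))),
    HEq z z' → downFrom chi i (m+1) z = (downFrom chi (i+1) m z').flatMap (chi i)
  | 0, i, z, z', hz => by
    have hzz : z = z' := eq_of_heq hz
    subst hzz
    rfl
  | (m+1), i, z, z', hz => by
    have key := down_eq m i (z.flatMap (chi (i+m+1))) (z'.flatMap (chi (i+1+m)))
      (@heq_flatMap A chi (i+m+1) (i+1+m) (by omega) z z' hz)
    exact key

lemma langStep {i : ℕ} {w : List (A i)} (hw : w ∈ lang chi i) (h2 : 2 ≤ w.length) :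
    ∃ v ∈ lang chi (i+1), w <:+: v.flatMap (chi i) := by
  obtain ⟨n, a, hinf⟩ := hw
  match n with
  | 0 =>
    have := hinf.length_le
    simp [downFrom] at this
    omega
  | (m+1) =>
    have h : i + (m+1) = i + 1 + m := by omega
    refine ⟨downFrom chi (i+1) m [h ▸ a], ⟨m, h ▸ a, List.infix_rfl⟩, ?_⟩
    rw [← down_eq chi m i [a] [h ▸ a] (heq_single h a)]
    exact hinf

lemma down_wt_sum : ∀ (d n : ℕ) (w : List (A (n + d))),
    ((downFrom chi n d w).map (wt chi n)).sum = (w.map (wt chi (n + d))).sum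
  | 0, n, w => rfl
  | (d+1), n, w => by
    have ih := down_wt_sum d n (w.flatMap (chi (n+d)))
    have h1 : downFrom chi n (d+1) w = downFrom chi n d (w.flatMap (chi (n+d))) := rfl
    rw [h1, ih, List.flatMap_def, List.map_flatten, List.sum_flatten, List.map_map, List.map_map]
    congr 1

lemma flatMap_wt_sum (i : ℕ) (l : List (A (i+1))) :
    ((l.flatMap (chi i)).map (wt chi i)).sum = (l.map (wt chi (i+1))).sum := by
  rw [List.flatMap_def, List.map_flatten, List.sum_flatten, List.map_map, List.map_map]
  congr 1

lemma wt_big (hne : ∀ i a, chi i a ≠ [])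
    (hgrow : ∀ n : ℕ, ∃ d : ℕ, 1 ≤ d ∧ ∀ a : A (n + d), 1 < (downFrom chi n d [a]).length) :
    ∀ k : ℕ, ∃ m : ℕ, ∀ a : A m, 2 ^ k ≤ wt chi m a := by
  intro k
  induction k with
  | zero => exact ⟨0, fun a => le_refl 1⟩
  | succ k ih =>
    obtain ⟨m, hm⟩ := ih
    obtain ⟨d, hd1, hd⟩ := hgrow m
    refine ⟨m + d, fun a => ?_⟩
    have hsum := down_wt_sum chi d m [a]
    have h2 : ([a].map (wt chi (m + d))).sum = wt chi (m+d) a := by simp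
    have h3 : ∀ x ∈ (downFrom chi m d [a]).map (wt chi m), 2 ^ k ≤ x := by
      intro x hx
      obtain ⟨b, _, rfl⟩ := List.mem_map.1 hx
      exact hm b
    have h4 := list_card_mul_le_sum h3
    rw [List.length_map] at h4
    have h5 := hd a
    have : 2 ^ (k+1) = 2 * 2 ^ k := by ring
    nlinarith [hsum, h2, h4, h5]

end DownAux

section MainAux

variable {A : ℕ → Type} (chi : (i : ℕ) → A (i + 1) → List (A i))

/-- All occurrences of a long word `w` at or after a cut-point occurrence are cut points. -/
lemma occ_cuts (hne : ∀ i a, chi i a ≠ []) {i N : ℕ}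
    (hN : ∀ w : List (A i), N ≤ w.length → w ∈ lang chi i →
      ∀ v ∈ lang chi (i + 1), ∀ p₁ p₂ : ℕ,
        IsLeast (occSet w (v.flatMap (chi i))) p₁ →
        IsLeast {p ∈ occSet w (v.flatMap (chi i)) | p₁ < p} p₂ →
        (p₁ ∈ cutPoints chi i v ↔ p₂ ∈ cutPoints chi i v))
    {v : List (A (i+1))} (hv : v ∈ lang chi (i+1))
    {w : List (A i)} (hw : w ∈ lang chi i) (hwN : N ≤ w.length) (hw1 : 1 ≤ w.length)
    {c₀ : ℕ} (hocc0 : c₀ ∈ occSet w (v.flatMap (chi i))) (hcut0 : c₀ ∈ cutPoints chi i v) :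
    ∀ t, t ∈ occSet w (v.flatMap (chi i)) → c₀ ≤ t → t ∈ cutPoints chi i v := by
  classical
  intro t
  induction t using Nat.strong_induction_on with
  | _ t IH =>
    intro hocc hle
    rcases eq_or_lt_of_le hle with rfl | hlt
    · exact hcut0
    set F := v.flatMap (chi i) with hF
    set P : ℕ → Prop := fun s => c₀ ≤ s ∧ s ∈ occSet w F with hP
    have hPc₀ : P c₀ := ⟨le_rfl, hocc0⟩
    set t' := Nat.findGreatest P (t-1) with ht'
    have hPt' : P t' := Nat.findGreatest_spec (by omega) hPc₀
    have ht'le : t' ≤ t - 1 := Nat.findGreatest_le _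
    have ht'cut : t' ∈ cutPoints chi i v := IH t' (by omega) hPt'.2 hPt'.1
    obtain ⟨j₀, hj₀, hclj₀⟩ := ht'cut
    have hclj₀' : t' = cl chi i v j₀ := hclj₀
    have hv' : v.drop j₀ ∈ lang chi (i+1) :=
      lang_infix chi (List.drop_suffix _ _).isInfix hv
    have hF' : (v.drop j₀).flatMap (chi i) = F.drop t' := by
      rw [flatMap_drop chi i v j₀, ← hclj₀']
    have hoccs : ∀ s, s ∈ occSet w ((v.drop j₀).flatMap (chi i)) ↔ (t' + s) ∈ occSet w F := by
      intro s
      rw [hF']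
      show w <+: (F.drop t').drop s ↔ w <+: F.drop (t' + s)
      rw [List.drop_drop]
    have h1 : IsLeast (occSet w ((v.drop j₀).flatMap (chi i))) 0 :=
      ⟨(hoccs 0).2 (by simpa using hPt'.2), fun s _ => Nat.zero_le s⟩
    have h2 : IsLeast {q ∈ occSet w ((v.drop j₀).flatMap (chi i)) | 0 < q} (t - t') := by
      constructor
      · refine ⟨(hoccs _).2 ?_, by omega⟩
        rw [show t' + (t - t') = t by omega]
        exact hocc
      · rintro s ⟨hs, hs0⟩
        by_contra hlt2
        push_neg at hlt2
        have hPs : P (t' + s) := ⟨by omega, (hoccs s).1 hs⟩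
        exact Nat.findGreatest_is_greatest (show Nat.findGreatest P (t-1) < t' + s by omega)
          (by omega) hPs
    have hvne : v.drop j₀ ≠ [] := by
      have hwt : w <+: F.drop t := hocc
      have hlen : t + w.length ≤ F.length := by
        have := hwt.length_le
        rw [List.length_drop] at this
        omega
      intro hnil
      have : (v.drop j₀).flatMap (chi i) = [] := by rw [hnil]; rfl
      rw [hF'] at this
      have := congrArg List.length this
      rw [List.length_drop] at this
      simp at this
      omega
    have hiff := hN w hwN hw _ hv' 0 (t - t') h1 h2
    have h0cut : 0 ∈ cutPoints chi i (v.drop j₀) := zero_mem_cutPoints chi hvne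
    have htt : (t - t') ∈ cutPoints chi i (v.drop j₀) := hiff.1 h0cut
    have := (cut_drop_iff chi hne (le_of_lt hj₀) (t - t')).1 htt
    rw [← hclj₀'] at this
    rw [show t' + (t - t') = t by omega] at this
    exact this

end MainAux

section LiftAux

variable {A : ℕ → Type} (chi : (i : ℕ) → A (i + 1) → List (A i))

set_option maxHeartbeats 2000000 in
lemma lift_one [∀ i, Fintype (A i)] [∀ i, Nonempty (A i)]
    (hne : ∀ i a, chi i a ≠ []) (hinj : ∀ i, Function.Injective (chi i))
    (hrec : ∀ i, CombRecognizable chi i)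
    {i p₀ : ℕ} {u : List (A i)} (hu : u ≠ []) (hsum : (u.map (wt chi i)).sum ≤ p₀)
    (hpows : ∀ K, ∃ k, K ≤ k ∧ pw u k ∈ lang chi i) (T : ℕ) :
    ∃ u' : List (A (i+1)), u' ≠ [] ∧ ((u'.map (wt chi (i+1))).sum ≤ p₀ ∧
      pw u' (T+1) ∈ lang chi (i+1)) := by
  classical
  obtain ⟨N₀, hN⟩ := hrec i
  set p := u.length with hp
  have hp1 : 1 ≤ p := List.length_pos_iff.2 hu
  set M := (Finset.univ.sup fun a : A (i+1) => (chi i a).length) + 1 with hM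
  have hM1 : 1 ≤ M := by omega
  have hMa : ∀ a : A (i+1), (chi i a).length < M := by
    intro a
    have h := Finset.le_sup (f := fun a : A (i+1) => (chi i a).length) (Finset.mem_univ a)
    have h' : (chi i a).length ≤ Finset.univ.sup fun a : A (i+1) => (chi i a).length := h
    omega
  set ℓ := N₀ + 1 with hℓ
  set TT := T + 5 with hTT
  set RB := (p + 2) * TT + 2 with hRB
  set K := (RB + 2) * p + ℓ + M + 2 with hK
  obtain ⟨k, hkK, hWlang⟩ := hpows K
  set W := pw u k with hW
  have hWlen : W.length = k * p := length_pw u k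
  have hkp : K ≤ k * p := le_trans hkK (Nat.le_mul_of_pos_right k hp1)
  have he1 : (RB + 2) * p = (RB + 1) * p + p := by ring
  have he2 : (RB + 1) * p = RB * p + p := by ring
  have hsafe : RB * p + p + p + ℓ + M + 2 ≤ W.length := by omega
  obtain ⟨v₀, hv₀lang, hWinf⟩ := langStep chi hWlang (by omega)
  obtain ⟨pre, suf, hsplit⟩ := hWinf
  set F₀ := v₀.flatMap (chi i) with hF₀
  set o := pre.length with ho
  have hF₀len : F₀.length = o + W.length + suf.length := by
    rw [← hsplit]; simp [ho]; omega
  -- trim point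
  set Q : ℕ → Prop := fun j => cl chi i v₀ j ≤ o + M with hQ
  have hQ0 : Q 0 := by simp [hQ]
  set j₀ := Nat.findGreatest Q v₀.length with hj₀def
  have hQj₀ : Q j₀ := Nat.findGreatest_spec (Nat.zero_le _) hQ0
  have hQj₀' : cl chi i v₀ j₀ ≤ o + M := hQj₀
  have hj₀le : j₀ ≤ v₀.length := Nat.findGreatest_le _
  have hj₀lt : j₀ < v₀.length := by
    rcases eq_or_lt_of_le hj₀le with he | h
    · exfalso
      have h2 : cl chi i v₀ j₀ = F₀.length := cl_of_le chi i he.ge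
      omega
    · exact h
  have hnotQ : ¬ Q (j₀ + 1) := by
    apply Nat.findGreatest_is_greatest (n := v₀.length) <;> omega
  have hnotQ' : o + M < cl chi i v₀ (j₀ + 1) := by
    by_contra hcon; push_neg at hcon; exact hnotQ hcon
  have hclstep : cl chi i v₀ (j₀+1) ≤ cl chi i v₀ j₀ + M := by
    rw [cl_succ chi i hj₀lt]
    have := hMa (v₀[j₀])
    omega
  set c := cl chi i v₀ j₀ with hc
  have hco : o < c := by omega
  set t₀ := c - o with ht₀
  have ht₀M : t₀ ≤ M := by omega
  set v := v₀.drop j₀ with hv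
  have hvlang : v ∈ lang chi (i+1) := lang_infix chi (List.drop_suffix _ _).isInfix hv₀lang
  set F := v.flatMap (chi i) with hF
  have hFdrop : F = F₀.drop c := by rw [hF, hv]; exact flatMap_drop chi i v₀ j₀
  have hFsplit : F = W.drop t₀ ++ suf := by
    rw [hFdrop, ← hsplit, List.append_assoc]
    rw [show c = pre.length + t₀ by omega, List.drop_append]
    rw [List.drop_append_of_le_length (by omega)]
    rw [List.drop_of_length_le (by omega), List.nil_append, Nat.add_sub_cancel_left]
  have hFlen : F.length = (W.length - t₀) + suf.length := by
    rw [hFsplit]; simp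
  -- segment transfer
  have hFW : ∀ q n, q + n + t₀ ≤ W.length → seg F q n = seg W (t₀ + q) n := by
    intro q n hqn
    rw [hFsplit, seg_append_left suf (by rw [List.length_drop]; omega), seg_drop]
  have hFshift : ∀ q n, q + n + p + t₀ ≤ W.length → seg F q n = seg F (q + p) n := by
    intro q n h
    rw [hFW q n (by omega), hFW (q+p) n (by omega)]
    have h2 := seg_pw_shift hu (k := k) (q := t₀ + q) (n := n) (by rw [← hp, ← hWlen]; omega)
    rw [← hW, ← hp] at h2
    rw [show t₀ + (q + p) = t₀ + q + p by omega]
    exact h2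
  set w := seg W t₀ ℓ with hwdef
  have hwseg : w = seg F 0 ℓ := by
    rw [hFW 0 ℓ (by omega), Nat.add_zero]
  have hwlen : w.length = ℓ := by rw [hwdef]; exact length_seg _ (by omega)
  have hwlang : w ∈ lang chi i := by rw [hwdef]; exact lang_infix chi (seg_infix W t₀ ℓ) hWlang
  have hocc0 : 0 ∈ occSet w F := by
    show w <+: F.drop 0
    rw [hwseg]; exact seg_prefix_drop F 0 ℓ
  have hoccstep : ∀ q, q ∈ occSet w F → q + ℓ + p + t₀ ≤ W.length → (q + p) ∈ occSet w F := by
    intro q hq hb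
    have h3 : w = seg F q ℓ := eq_seg hq hwlen
    have h4 : w = seg F (q + p) ℓ := by rw [h3, hFshift q ℓ (by omega)]
    show w <+: F.drop (q + p)
    rw [h4]; exact seg_prefix_drop _ _ _
  have hoccmul : ∀ r, r * p + ℓ + p + t₀ ≤ W.length → r * p ∈ occSet w F := by
    intro r
    induction r with
    | zero => intro _; simpa using hocc0
    | succ r ih =>
      intro hb
      have hm : (r+1) * p = r * p + p := by ring
      have h1 : r * p ∈ occSet w F := ih (by omega)
      rw [hm]
      exact hoccstep _ h1 (by omega)
  have hWt₀ : t₀ + 1 ≤ W.length := by omega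
  have hFlenb : W.length - t₀ ≤ F.length := by omega
  have hvne : v ≠ [] := by
    intro hnil
    have h8 : F = [] := by rw [hF, hnil]; rfl
    have h9 : F.length = 0 := by rw [h8]; rfl
    omega
  have hcut00 : (0:ℕ) ∈ cutPoints chi i v := zero_mem_cutPoints chi hvne
  have hallcut : ∀ t ∈ occSet w F, t ∈ cutPoints chi i v := by
    intro t ht
    exact occ_cuts chi hne hN hvlang hwlang (by omega) (by omega) hocc0 hcut00 t ht (Nat.zero_le t)
  have hcutstep : ∀ c', c' ∈ cutPoints chi i v → c' + ℓ + p + t₀ ≤ W.length →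
      c' + p ∈ cutPoints chi i v := by
    intro c' hc' hb
    set wc := seg F c' ℓ with hwc
    have hseg1 : seg F c' ℓ = seg W (t₀ + c') ℓ := hFW c' ℓ (by omega)
    have hwclen : wc.length = ℓ := by
      rw [hwc, hseg1]; exact length_seg _ (by omega)
    have hwclang : wc ∈ lang chi i := by
      rw [hwc, hseg1]; exact lang_infix chi (seg_infix _ _ _) hWlang
    have hocc1 : c' ∈ occSet wc F := by
      show wc <+: F.drop c'
      rw [hwc]; exact seg_prefix_drop F c' ℓ
    have hocc2 : c' + p ∈ occSet wc F := by
      have h4 : wc = seg F (c' + p) ℓ := by rw [hwc, hFshift c' ℓ (by omega)]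
      show wc <+: F.drop (c' + p)
      rw [h4]; exact seg_prefix_drop _ _ _
    exact occ_cuts chi hne hN hvlang hwclang (by omega) (by omega) hocc1 hc' (c'+p) hocc2 (by omega)
  -- windows
  set Cr : ℕ → Finset ℕ := fun r => (Finset.range p).filter (fun q => r * p + q ∈ cutPoints chi i v) with hCr
  have hCrmem : ∀ r q, q ∈ Cr r ↔ (q < p ∧ r * p + q ∈ cutPoints chi i v) := by
    intro r q
    rw [hCr]
    simp [Finset.mem_filter, Finset.mem_range]
  have hCr0 : ∀ r, r * p + ℓ + p + t₀ ≤ W.length → 0 ∈ Cr r := by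
    intro r hb
    rw [hCrmem]
    exact ⟨hp1, by simpa using hallcut (r*p) (hoccmul r hb)⟩
  have hCrsub : ∀ r, (r+1) * p + ℓ + p + t₀ ≤ W.length → Cr r ⊆ Cr (r+1) := by
    intro r hb q hq
    rw [hCrmem] at hq ⊢
    have hm : (r+1) * p = r * p + p := by ring
    refine ⟨hq.1, ?_⟩
    have h9 := hcutstep (r*p + q) hq.2 (by omega)
    rw [hm, show r*p + p + q = r*p + q + p by omega]
    exact h9
  have hbord : ∀ r, r ≤ RB + 1 → r * p + ℓ + p + t₀ ≤ W.length := by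
    intro r hr
    have h5 : r * p ≤ (RB+1) * p := Nat.mul_le_mul_right p hr
    omega
  have hCrsub' : ∀ r r', r ≤ r' → r' ≤ RB → Cr r ⊆ Cr r' := by
    intro r r' hrr hr'
    induction r' with
    | zero =>
      have h0 : r = 0 := by omega
      rw [h0]
    | succ r' ih =>
      rcases eq_or_lt_of_le hrr with rfl | hlt
      · exact subset_rfl
      · exact (ih (by omega) (by omega)).trans (hCrsub r' (hbord (r'+1) (by omega)))
  have hCrcard : ∀ r, (Cr r).card ≤ p := by
    intro r
    rw [hCr]
    exact le_trans (Finset.card_filter_le _ _) (by simp)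
  have hex : ∃ m, m < p + 1 ∧ (Cr (m * TT)).card = (Cr ((m+1) * TT)).card := by
    by_contra hcon
    push_neg at hcon
    have hgrow2 : ∀ m, m ≤ p + 1 → m ≤ (Cr (m * TT)).card := by
      intro m
      induction m with
      | zero => intro _; exact Nat.zero_le _
      | succ m ih =>
        intro hm
        have hmul1 : m * TT ≤ (m+1) * TT := Nat.mul_le_mul_right TT (by omega)
        have hmul2 : (m+1) * TT ≤ RB := by
          have e3 : (m+1) * TT ≤ (p+1) * TT := Nat.mul_le_mul_right TT (by omega)
          have e4 : (p+1)*TT ≤ (p+2)*TT := Nat.mul_le_mul_right TT (by omega)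
          omega
        have hsubm := hCrsub' (m*TT) ((m+1)*TT) hmul1 hmul2
        have hlt := lt_of_le_of_ne (Finset.card_le_card hsubm) (hcon m (by omega))
        have := ih (by omega)
        omega
    have h6 := hgrow2 (p+1) le_rfl
    have h7 := hCrcard ((p+1) * TT)
    omega
  obtain ⟨m₁, hm₁, hcardeq⟩ := hex
  set r₁ := m₁ * TT with hr₁
  have hr₁TT : r₁ + TT = (m₁ + 1) * TT := by rw [hr₁]; ring
  have hr₁RB : r₁ + TT ≤ RB := by
    have e3 : (m₁+1) * TT ≤ (p+1)*TT := Nat.mul_le_mul_right TT (by omega)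
    have e4 : (p+1)*TT ≤ (p+2)*TT := Nat.mul_le_mul_right TT (by omega)
    omega
  have hconst : ∀ r, r₁ ≤ r → r ≤ r₁ + TT → Cr r = Cr r₁ := by
    intro r h1 h2
    have e1 : Cr r₁ = Cr (r₁ + TT) := by
      apply Finset.eq_of_subset_of_card_le (hCrsub' _ _ (by omega) hr₁RB)
      rw [hr₁TT]
      exact le_of_eq hcardeq.symm
    have hs1 : Cr r₁ ⊆ Cr r := hCrsub' _ _ h1 (by omega)
    have hs2 : Cr r ⊆ Cr (r₁ + TT) := hCrsub' _ _ h2 (by omega)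
    apply Finset.Subset.antisymm ?_ hs1
    rw [e1]
    exact hs2
  have hmulmono : ∀ a b : ℕ, a ≤ b → a * p ≤ b * p := fun a b h => Nat.mul_le_mul_right p h
  have hsafetop : (r₁ + TT) * p + ℓ + p + t₀ + 1 ≤ W.length := by
    have h20 := hmulmono _ _ hr₁RB
    omega
  have hcut_iff : ∀ c', r₁ * p ≤ c' → c' + p ≤ (r₁ + TT) * p →
      (c' ∈ cutPoints chi i v ↔ c' + p ∈ cutPoints chi i v) := by
    intro c' h1 h2
    constructor
    · intro hcp
      exact hcutstep c' hcp (by omega)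
    · intro hcp
      set r' := (c' + p) / p with hr'
      set q' := (c' + p) % p with hq'
      have hdm : r' * p + q' = c' + p := by
        rw [hr', hq', Nat.mul_comm]
        exact Nat.div_add_mod _ _
      have hq'p : q' < p := Nat.mod_lt _ (by omega)
      have hr'1 : r₁ + 1 ≤ r' := by
        have h21 : (r₁ + 1) * p ≤ c' + p := by
          have e5 : (r₁+1)*p = r₁*p + p := by ring
          omega
        rw [hr']
        exact (Nat.le_div_iff_mul_le (by omega)).2 h21
      have hr'2 : r' ≤ r₁ + TT := by
        by_contra hcon
        push_neg at hcon
        have h22 : (r₁ + TT + 1) * p ≤ r' * p := hmulmono _ _ (by omega)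
        have e5 : (r₁+TT+1)*p = (r₁+TT)*p + p := by ring
        omega
      have hq'mem : q' ∈ Cr r' := by
        rw [hCrmem]
        refine ⟨hq'p, ?_⟩
        rw [hdm]
        exact hcp
      have hcr1 : Cr r' = Cr r₁ := hconst r' (by omega) hr'2
      have hcr2 : Cr (r'-1) = Cr r₁ := hconst (r'-1) (by omega) (by omega)
      have hmem2 : q' ∈ Cr (r'-1) := by rw [hcr2, ← hcr1]; exact hq'mem
      rw [hCrmem] at hmem2
      have e6 : (r' - 1) * p + p = r' * p := by
        have e7 : r' - 1 + 1 = r' := by omega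
        calc (r'-1)*p + p = (r'-1+1)*p := by ring
        _ = r' * p := by rw [e7]
      have e8 : (r' - 1) * p + q' = c' := by omega
      rw [← e8]
      exact hmem2.2
  have hmulcut : ∀ r, r ≤ RB → r * p ∈ cutPoints chi i v := by
    intro r hr
    exact hallcut _ (hoccmul r (hbord r (by omega)))
  have hnext : ∀ j r, j < v.length → cl chi i v j < (r+1) * p → (r+1) ≤ RB →
      cl chi i v (j+1) ≤ (r+1) * p := by
    intro j r hj hlt hr
    obtain ⟨j₂, hj₂lt, heq⟩ := hmulcut (r+1) hr
    have heq' : (r+1)*p = cl chi i v j₂ := heq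
    have hjj₂ : j < j₂ := by
      by_contra hcc; push_neg at hcc
      have := cl_mono chi i v hcc
      omega
    have := cl_mono chi i v (show j + 1 ≤ j₂ by omega)
    omega
  have hletter : ∀ j, j < v.length → r₁ * p ≤ cl chi i v j →
      cl chi i v (j+1) + p ≤ (r₁ + TT) * p →
      ∃ j', j' + 1 < v.length ∧ cl chi i v j' = cl chi i v j + p ∧
        cl chi i v (j'+1) = cl chi i v (j+1) + p ∧ v[j']? = v[j]? := by
    intro j hj h1 h2
    have hclj1 : cl chi i v j < cl chi i v (j+1) := cl_strict chi hne i (by omega) hj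
    have hcut_c : cl chi i v j ∈ cutPoints chi i v := ⟨j, hj, rfl⟩
    have hcp : cl chi i v j + p ∈ cutPoints chi i v :=
      (hcut_iff _ h1 (by omega)).1 hcut_c
    obtain ⟨j', hj'lt, hj'eqr⟩ := hcp
    have hj'eq : cl chi i v j + p = cl chi i v j' := hj'eqr
    have hj1lt : j + 1 < v.length := by
      by_contra hcon
      push_neg at hcon
      have h23 : cl chi i v (j+1) = F.length := cl_of_le chi i (by omega)
      have h24 := hmulmono _ _ hr₁RB
      omega
    have hcut_c2 : cl chi i v (j+1) + p ∈ cutPoints chi i v :=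
      (hcut_iff _ (by have := cl_mono chi i v (show j ≤ j+1 by omega); omega) h2).1 ⟨j+1, hj1lt, rfl⟩
    obtain ⟨j'', hj''lt, hj''eqr⟩ := hcut_c2
    have hj''eq : cl chi i v (j+1) + p = cl chi i v j'' := hj''eqr
    have hj'j'' : j' < j'' := by
      by_contra hcon
      push_neg at hcon
      have := cl_mono chi i v hcon
      omega
    have hnb : j'' = j' + 1 := by
      by_contra hcon
      have hj'1 : j' + 1 < j'' := by omega
      have hb1 : cl chi i v j' < cl chi i v (j'+1) := cl_strict chi hne i (by omega) (by omega)
      have hb2 : cl chi i v (j'+1) < cl chi i v j'' := cl_strict chi hne i hj'1 (by omega)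
      have hdcut : cl chi i v (j'+1) ∈ cutPoints chi i v := ⟨j'+1, by omega, rfl⟩
      have hge : r₁ * p ≤ cl chi i v (j'+1) - p := by omega
      have hle2 : (cl chi i v (j'+1) - p) + p ≤ (r₁ + TT) * p := by omega
      have hback := (hcut_iff _ hge hle2).2 (by
        rw [show cl chi i v (j'+1) - p + p = cl chi i v (j'+1) by omega]
        exact hdcut)
      obtain ⟨j₂, hj₂lt, hj₂eqr⟩ := hback
      have hj₂eq : cl chi i v (j'+1) - p = cl chi i v j₂ := hj₂eqr
      have hx1 : j < j₂ := by
        by_contra hcc; push_neg at hcc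
        have := cl_mono chi i v hcc
        omega
      have hx2 : j₂ < j + 1 := by
        by_contra hcc; push_neg at hcc
        have := cl_mono chi i v hcc
        omega
      omega
    have hj'ltlen : j' < v.length := by omega
    have hLj : (chi i (v[j]'hj)).length = cl chi i v (j+1) - cl chi i v j := by
      rw [cl_succ chi i hj]; omega
    have hLj' : (chi i (v[j']'hj'ltlen)).length = cl chi i v (j'+1) - cl chi i v j' := by
      rw [cl_succ chi i hj'ltlen]; omega
    have hLeq : (chi i (v[j']'hj'ltlen)).length = (chi i (v[j]'hj)).length := by
      rw [hLj, hLj']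
      have h25 : cl chi i v (j'+1) = cl chi i v (j+1) + p := by rw [← hnb]; omega
      omega
    have he1 := chunk_eq chi i hj
    have he2 := chunk_eq chi i hj'ltlen
    have himg : chi i (v[j']'hj'ltlen) = chi i (v[j]'hj) := by
      rw [he2, hLeq, ← hj'eq,
        ← hFshift (cl chi i v j) ((chi i (v[j]'hj)).length) (by omega), ← he1]
    refine ⟨j', by omega, hj'eq.symm, by rw [← hnb]; omega, ?_⟩
    rw [List.getElem?_eq_getElem hj'ltlen, List.getElem?_eq_getElem hj]
    exact congrArg some (hinj i himg)
  -- base cut at r₁ * p and the index period Δ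
  have hr₁occ : r₁ * p ∈ occSet w F := hoccmul r₁ (hbord r₁ (by omega))
  obtain ⟨j₁, hj₁lt, hj₁eqr⟩ := hallcut _ hr₁occ
  have hj₁eq : r₁ * p = cl chi i v j₁ := hj₁eqr
  have hj₁1 : cl chi i v (j₁+1) ≤ r₁ * p + p := by
    have e9 : (r₁+1)*p = r₁*p+p := by ring
    have h26 := hnext j₁ r₁ hj₁lt (by omega) (by omega)
    omega
  obtain ⟨jd, hjd1lt, hjdeqr, hjdeq2r, hjdletr⟩ := hletter j₁ hj₁lt (by omega) (by
    have h27 := hmulmono (r₁+2) (r₁+TT) (by omega)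
    have e9 : (r₁+2)*p = r₁*p + p + p := by ring
    omega)
  have hjdgt : j₁ < jd := by
    by_contra hcc; push_neg at hcc
    have := cl_mono chi i v hcc
    omega
  set Δ := jd - j₁ with hΔdef
  have hΔ1 : 1 ≤ Δ := by omega
  have hjd : jd = j₁ + Δ := by omega
  have hclΔ : cl chi i v (j₁ + Δ) = cl chi i v j₁ + p := by rw [← hjd]; exact hjdeqr
  have hclΔ1 : cl chi i v (j₁ + Δ + 1) = cl chi i v (j₁ + 1) + p := by rw [← hjd]; exact hjdeq2r
  have hletΔ : v[j₁ + Δ]? = v[j₁]? := by rw [← hjd]; exact hjdletr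
  -- uniform bound
  have hkey : ∀ s b, s ≤ T + 3 → b ≤ Δ → cl chi i v (j₁ + b) + s * p + p ≤ (r₁ + TT) * p := by
    intro s b hs hb
    have h28 := cl_mono chi i v (show j₁ + b ≤ j₁ + Δ by omega)
    have h29 := hmulmono s (T+3) hs
    have e1 : (r₁+TT)*p = r₁*p + (T+3)*p + p + p := by rw [hTT]; ring
    omega
  have hclbound : ∀ x, x ≤ (r₁ + TT) * p → x < F.length := by
    intro x hx
    have h11 := hmulmono (r₁+TT) RB hr₁RB
    omega
  -- cut-position periodicity, double induction
  have OUTCL : ∀ s, s ≤ T + 3 → ∀ b, b ≤ Δ →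
      cl chi i v (j₁ + s*Δ + b) = cl chi i v (j₁ + b) + s * p := by
    intro s
    induction s with
    | zero => intro _ b hb; simp
    | succ s ihs =>
      intro hs b
      induction b with
      | zero =>
        intro _
        have h1 := ihs (by omega) Δ le_rfl
        have e2 : (s+1)*Δ = s*Δ + Δ := by ring
        rw [show j₁ + (s+1)*Δ + 0 = j₁ + s*Δ + Δ by omega]
        rw [h1, hclΔ]
        have e3 : (s+1)*p = s*p + p := by ring
        have e4 : cl chi i v (j₁ + 0) = cl chi i v j₁ := rfl
        omega
      | succ b ihb =>
        intro hb
        have hQb := ihb (by omega)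
        have hOUTsb := ihs (by omega) b (by omega)
        have hOUTsb1 := ihs (by omega) (b+1) hb
        have hjlt : j₁ + s*Δ + b < v.length := by
          apply lt_length_of_cl_lt chi hne i
          rw [hOUTsb]
          exact hclbound _ (by have := hkey s b (by omega) (by omega); omega)
        obtain ⟨j', hj'1lt, he1, he2, he3⟩ := hletter (j₁ + s*Δ + b) hjlt
          (by
            rw [hOUTsb]
            have h40 := cl_mono chi i v (show j₁ ≤ j₁ + b by omega)
            omega)
          (by
            rw [show j₁ + s*Δ + b + 1 = j₁ + s*Δ + (b+1) by omega, hOUTsb1]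
            exact hkey s (b+1) (by omega) (by omega))
        have hidlt : j₁ + (s+1)*Δ + b < v.length := by
          apply lt_length_of_cl_lt chi hne i
          rw [hQb]
          exact hclbound _ (by have := hkey (s+1) b (by omega) (by omega); omega)
        have hid : j' = j₁ + (s+1)*Δ + b :=
          cl_inj chi hne i (show j' ≤ v.length by omega)
            (show j₁ + (s+1)*Δ + b ≤ v.length by omega)
            (show cl chi i v j' = cl chi i v (j₁ + (s+1)*Δ + b) by
              rw [he1, hOUTsb, hQb]
              have e3 : (s+1)*p = s*p + p := by ring
              omega)
        rw [show j₁ + (s+1)*Δ + (b+1) = j' + 1 by omega, he2,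
          show j₁ + s*Δ + b + 1 = j₁ + s*Δ + (b+1) by omega, hOUTsb1]
        have e3 : (s+1)*p = s*p + p := by ring
        omega
  -- letter periodicity
  have hletters : ∀ s, s ≤ T + 2 → ∀ b, b < Δ → v[j₁ + s*Δ + b]? = v[j₁ + b]? := by
    intro s
    induction s with
    | zero =>
      intro _ b _
      rw [show j₁ + 0*Δ + b = j₁ + b by omega]
    | succ s ihs =>
      intro hs b hb
      have hOUTsb := OUTCL s (by omega) b (by omega)
      have hOUTsb1 := OUTCL s (by omega) (b+1) (by omega)
      have hOUTs1b := OUTCL (s+1) (by omega) b (by omega)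
      have hjlt : j₁ + s*Δ + b < v.length := by
        apply lt_length_of_cl_lt chi hne i
        rw [hOUTsb]
        exact hclbound _ (by have := hkey s b (by omega) (by omega); omega)
      obtain ⟨j', hj'1lt, he1, he2, he3⟩ := hletter (j₁ + s*Δ + b) hjlt
        (by
          rw [hOUTsb]
          have h40 := cl_mono chi i v (show j₁ ≤ j₁ + b by omega)
          omega)
        (by
          rw [show j₁ + s*Δ + b + 1 = j₁ + s*Δ + (b+1) by omega, hOUTsb1]
          exact hkey s (b+1) (by omega) (by omega))
      have hidlt : j₁ + (s+1)*Δ + b < v.length := by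
        apply lt_length_of_cl_lt chi hne i
        rw [hOUTs1b]
        exact hclbound _ (by have := hkey (s+1) b (by omega) (by omega); omega)
      have hid : j' = j₁ + (s+1)*Δ + b :=
        cl_inj chi hne i (show j' ≤ v.length by omega)
          (show j₁ + (s+1)*Δ + b ≤ v.length by omega)
          (show cl chi i v j' = cl chi i v (j₁ + (s+1)*Δ + b) by
            rw [he1, hOUTsb, hOUTs1b]
            have e3 : (s+1)*p = s*p + p := by ring
            omega)
      rw [hid] at he3
      exact he3.trans (ihs (by omega) b hb)
  -- extraction of the period block
  set u' := seg v j₁ Δ with hu'def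
  have hclT2 : cl chi i v (j₁ + (T+2)*Δ) = cl chi i v j₁ + (T+2)*p := by
    have := OUTCL (T+2) (by omega) 0 (by omega)
    rw [show j₁ + (T+2)*Δ + 0 = j₁ + (T+2)*Δ by omega, show j₁ + 0 = j₁ by omega] at this
    exact this
  have hidxlast : j₁ + (T+2)*Δ < v.length := by
    apply lt_length_of_cl_lt chi hne i
    rw [hclT2]
    apply hclbound
    have := hkey (T+2) 0 (by omega) (by omega)
    have h30 := cl_mono chi i v (show j₁ ≤ j₁ + 0 by omega)
    omega
  have hΔle : Δ ≤ (T+2)*Δ := Nat.le_mul_of_pos_left Δ (by omega)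
  have hT1le : (T+1)*Δ ≤ (T+2)*Δ := Nat.mul_le_mul_right Δ (by omega)
  have hu'len : u'.length = Δ := by rw [hu'def]; exact length_seg v (by omega)
  have hu'ne : u' ≠ [] := by
    intro h0
    rw [h0] at hu'len
    simp at hu'len
    omega
  have hstep : ∀ (x : ℕ) (hx : x < u'.length), u'[x] = v[j₁ + x]'(by omega) := by
    intro x hx
    have hx2 : x < (seg v j₁ Δ).length := by rw [← hu'def]; exact hx
    rw [List.getElem_of_eq hu'def hx]
    exact seg_getElem v hx2 (by omega)
  have hpow : pw u' (T+1) = seg v j₁ ((T+1)*Δ) := by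
    apply List.ext_getElem
    · rw [length_pw, hu'len, length_seg v (by omega)]
    · intro m h1 h2
      have hm : m < (T+1)*Δ := by rwa [length_pw, hu'len] at h1
      rw [pw_getElem u' (T+1) m hu'ne h1]
      rw [seg_getElem v h2 (by omega)]
      rw [hstep (m % u'.length) (Nat.mod_lt _ (by omega))]
      have e5 : m % u'.length = m % Δ := by rw [hu'len]
      have hdam := Nat.div_add_mod m Δ
      have hsd : m / Δ < T + 1 := Nat.div_lt_iff_lt_mul (by omega) |>.2 (by omega)
      have hlet := hletters (m / Δ) (by omega) (m % Δ) (Nat.mod_lt _ (by omega))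
      rw [show j₁ + (m/Δ)*Δ + m % Δ = j₁ + m by
        have := Nat.div_add_mod m Δ
        have e6 : (m/Δ)*Δ = Δ*(m/Δ) := by ring
        omega] at hlet
      rw [List.getElem?_eq_getElem (by omega), List.getElem?_eq_getElem (by omega)] at hlet
      have hlet2 := Option.some.inj hlet
      have e7 : j₁ + m % u'.length = j₁ + m % Δ := by rw [e5]
      have hopt : v[j₁ + m % u'.length]? = v[j₁ + m]? := by
        rw [e7, List.getElem?_eq_getElem (show j₁ + m % Δ < v.length by omega),
          List.getElem?_eq_getElem (show j₁ + m < v.length by omega)]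
        exact congrArg some hlet2.symm
      rw [List.getElem?_eq_getElem (show j₁ + m % u'.length < v.length by omega),
        List.getElem?_eq_getElem (show j₁ + m < v.length by omega)] at hopt
      exact Option.some.inj hopt
  have hpowlang : pw u' (T+1) ∈ lang chi (i+1) := by
    apply lang_infix chi _ hvlang
    rw [hpow]
    exact seg_infix v _ _
  -- weight bound
  have himg2 : u'.flatMap (chi i) = seg F (r₁ * p) p := by
    rw [hu'def]
    have h31 := flatMap_seg chi i v j₁ Δ
    rw [h31, ← hF]
    rw [show cl chi i v (j₁+Δ) - cl chi i v j₁ = p by omega,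
      show cl chi i v j₁ = r₁ * p from hj₁eq.symm]
  have hwind : seg F (r₁*p) p = seg W (t₀ + r₁*p) p := hFW (r₁*p) p (by
    have := hkey 0 0 (by omega) (by omega)
    have h30 := cl_mono chi i v (show j₁ ≤ j₁ + 0 by omega)
    omega)
  have hperm : (seg W (t₀ + r₁*p) p).Perm u := by
    have h32 := seg_pw_perm hu (k := k) (s := t₀ + r₁*p) (by
      rw [← hp, ← hWlen]
      have := hkey 0 0 (by omega) (by omega)
      have h30 := cl_mono chi i v (show j₁ ≤ j₁ + 0 by omega)
      omega)
    rw [← hW, ← hp] at h32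
    exact h32
  have hsum' : (u'.map (wt chi (i+1))).sum ≤ p₀ := by
    rw [← flatMap_wt_sum chi i u', himg2, hwind]
    rw [(hperm.map (wt chi i)).sum_eq]
    exact hsum
  exact ⟨u', hu'ne, hsum', hpowlang⟩

end LiftAux

section FinalAux

variable {A : ℕ → Type} (chi : (i : ℕ) → A (i + 1) → List (A i))

lemma length_le_wtsum (hne : ∀ i a, chi i a ≠ []) (i : ℕ) (l : List (A i)) :
    l.length ≤ (l.map (wt chi i)).sum := by
  induction l with
  | nil => simp
  | cons a t ih =>
    have := wt_pos chi hne i a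
    simp only [List.length_cons, List.map_cons, List.sum_cons]
    omega

/-- the inductive invariant: a nonempty block of total level-0 weight at most `p₀`
whose arbitrarily high powers belong to the level-`i` language. -/
def Per (i p₀ : ℕ) : Prop := ∃ u : List (A i), u ≠ [] ∧ (u.map (wt chi i)).sum ≤ p₀ ∧
    ∀ K, ∃ k, K ≤ k ∧ pw u k ∈ lang chi i

lemma per_lift [∀ i, Fintype (A i)] [∀ i, Nonempty (A i)]
    (hne : ∀ i a, chi i a ≠ []) (hinj : ∀ i, Function.Injective (chi i))
    (hrec : ∀ i, CombRecognizable chi i)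
    {i p₀ : ℕ} (h : Per chi i p₀) : Per chi (i+1) p₀ := by
  classical
  obtain ⟨u, hu, hsum, hpows⟩ := h
  have hall : ∀ T : ℕ, ∃ u' : List (A (i+1)), u' ≠ [] ∧ ((u'.map (wt chi (i+1))).sum ≤ p₀ ∧
      pw u' (T+1) ∈ lang chi (i+1)) :=
    fun T => lift_one chi hne hinj hrec hu hsum hpows T
  choose f hf1 hf2 using hall
  have hfin : {l : List (A (i+1)) | l.length ≤ p₀}.Finite := List.finite_length_le _ _
  have hmem : ∀ T, f T ∈ {l : List (A (i+1)) | l.length ≤ p₀} := by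
    intro T
    exact le_trans (length_le_wtsum chi hne (i+1) (f T)) (hf2 T).1
  haveI : Finite {l : List (A (i+1)) | l.length ≤ p₀} := hfin.to_subtype
  set g : ℕ → {l : List (A (i+1)) | l.length ≤ p₀} := fun T => ⟨f T, hmem T⟩ with hg
  obtain ⟨y, hy⟩ := Finite.exists_infinite_fiber g
  have hyinf : (g ⁻¹' {y}).Infinite := Set.infinite_coe_iff.1 hy
  obtain ⟨T₀, hT₀⟩ := hyinf.nonempty
  have hfT₀ : f T₀ = y.1 := congrArg Subtype.val hT₀
  refine ⟨y.1, by rw [← hfT₀]; exact hf1 T₀, by rw [← hfT₀]; exact (hf2 T₀).1, ?_⟩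
  intro K
  obtain ⟨T, hTmem, hTK⟩ := hyinf.exists_gt K
  have hfT : f T = y.1 := congrArg Subtype.val hTmem
  refine ⟨T + 1, by omega, ?_⟩
  rw [← hfT]
  exact (hf2 T).2

lemma per_mod {α : Type*} (x : ℕ → α) (p : ℕ) (hper : ∀ t, x (t + p) = x t)
    (hp : 1 ≤ p) : ∀ m, x m = x (m % p) := by
  intro m
  induction m using Nat.strong_induction_on with
  | _ m IH =>
    by_cases h : m < p
    · rw [Nat.mod_eq_of_lt h]
    · push_neg at h
      have e : m = (m - p) + p := by omega
      rw [e, hper (m - p), IH (m - p) (by omega)]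
      congr 1
      rw [Nat.add_mod_right]

lemma ofFn_periodic_pw {α : Type*} (x : ℕ → α) (p : ℕ) (hp : 1 ≤ p)
    (hper : ∀ t, x (t + p) = x t) (k : ℕ) :
    List.ofFn (fun t : Fin (k * p) => x t) = pw (List.ofFn fun t : Fin p => x t) k := by
  have hne : (List.ofFn fun t : Fin p => x t) ≠ [] := by
    have : (List.ofFn fun t : Fin p => x t).length = p := by simp
    intro h0; rw [h0] at this; simp at this; omega
  apply List.ext_getElem
  · simp [length_pw]
  · intro m h1 h2
    rw [List.getElem_ofFn]
    rw [pw_getElem _ _ _ hne h2]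
    rw [List.getElem_ofFn]
    have hlen : (List.ofFn fun t : Fin p => x t).length = p := by simp
    show x m = x (m % (List.ofFn fun t : Fin p => x t).length)
    rw [hlen]
    exact per_mod x p hper hp m

lemma prefix_lang [TopologicalSpace (A 0)] [DiscreteTopology (A 0)]
    {x : ℕ → A 0} (hx : x ∈ sadicX chi) (m : ℕ) :
    (List.ofFn fun t : Fin m => x t) ∈ lang chi 0 := by
  classical
  set U : Set (ℕ → A 0) := {y | ∀ t, t < m → y t = x t} with hU
  have hUopen : IsOpen U := by
    have he : U = ⋂ t ∈ Finset.range m, (fun y : ℕ → A 0 => y t) ⁻¹' {x t} := by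
      ext y
      simp [hU, Finset.mem_range]
    rw [he]
    apply isOpen_biInter_finset
    intro t _
    exact (continuous_apply t).isOpen_preimage _ (isOpen_discrete _)
  have hxU : x ∈ U := fun t _ => rfl
  obtain ⟨y, hyU, hyS⟩ := mem_closure_iff.1 hx U hUopen hxU
  obtain ⟨z, hgood, j, rfl⟩ := hyS
  obtain ⟨n, a, hpre⟩ := hgood (j + m)
  have hsplitofn : (List.ofFn fun t : Fin (j+m) => z t)
      = (List.ofFn fun t : Fin j => z (Fin.castAdd m t)) ++ (List.ofFn fun t : Fin m => z (j + t)) := by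
    rw [List.ofFn_add]
    rfl
  have hinf1 : (List.ofFn fun t : Fin m => x t) <:+: (List.ofFn fun t : Fin (j+m) => z t) := by
    rw [hsplitofn]
    refine ⟨List.ofFn fun t : Fin j => z (Fin.castAdd m t), [], ?_⟩
    simp only [List.append_nil]
    congr 1
    apply List.ext_getElem
    · simp
    · intro t h1 h2
      simp only [List.getElem_ofFn]
      have := hyU t (by simpa using h1)
      simp at this ⊢
      rw [← this]
      congr 1
      omega
  exact ⟨n, a, hinf1.trans (hpre.isInfix.trans List.infix_rfl)⟩

lemma base_per [TopologicalSpace (A 0)] [DiscreteTopology (A 0)]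
    {x : ℕ → A 0} (hx : x ∈ sadicX chi) {p : ℕ} (hp : 1 ≤ p)
    (hper : ∀ t, x (t + p) = x t) : Per chi 0 p := by
  refine ⟨List.ofFn fun t : Fin p => x t, ?_, ?_, ?_⟩
  · have hlen : (List.ofFn fun t : Fin p => x t).length = p := by simp
    intro h0; rw [h0] at hlen; simp at hlen; omega
  · have he : ((List.ofFn fun t : Fin p => x t).map (wt chi 0)).sum
        = (List.ofFn fun t : Fin p => x t).length := by
      have : wt chi 0 = fun _ : A 0 => 1 := rfl
      rw [this]
      induction (List.ofFn fun t : Fin p => x t) with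
      | nil => simp
      | cons a l ih => simp [ih]; omega
    rw [he]
    simp
  · intro K
    refine ⟨K, le_rfl, ?_⟩
    rw [← ofFn_periodic_pw x p hp hper K]
    exact prefix_lang chi hx (K * p)

end FinalAux

/-- an injective, combinatorially recognizable S-adic subshift in which
compositions of the substitutions eventually have length `> 1` on every letter is
aperiodic. -/
theorem statement2 (A : ℕ → Type) [∀ i, Fintype (A i)] [∀ i, Nonempty (A i)]
    [∀ i, TopologicalSpace (A i)] [∀ i, DiscreteTopology (A i)]
    (chi : (i : ℕ) → A (i + 1) → List (A i))
    (hne : ∀ i a, chi i a ≠ [])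
    (hinj : ∀ i, Function.Injective (chi i))
    (hrec : ∀ i, CombRecognizable chi i)
    (hgrow : ∀ n : ℕ, ∃ d : ℕ, 1 ≤ d ∧ ∀ a : A (n + d),
      1 < (downFrom chi n d [a]).length) :
    ∀ x ∈ sadicX chi, ∀ p : ℕ, 1 ≤ p → (fun i => x (i + p)) ≠ x := by
  intro x hx p hp heq
  have hper : ∀ t, x (t + p) = x t := fun t => congrFun heq t
  have hPer : ∀ i, Per chi i p := by
    intro i
    induction i with
    | zero => exact base_per chi hx hp hper
    | succ i ih => exact per_lift chi hne hinj hrec ih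
  obtain ⟨m, hm⟩ := wt_big chi hne hgrow p
  obtain ⟨u, hune, husum, _⟩ := hPer m
  have hpow : p < 2 ^ p := Nat.lt_two_pow_self
  cases u with
  | nil => exact hune rfl
  | cons a t =>
    have h1 := hm a
    simp only [List.map_cons, List.sum_cons] at husum
    omega
end

section
/- Let (k_i)_{i≥1} be a sequence of positive integers satisfying condition (★). Then there exist a strictly increasing sequence of indices (m_j)_{j≥1}, linearly independent row vectors v₁, v₂, v₃ ∈ ℝ³, real numbers 0 < λ₃ < 1 < λ₂ ≤ λ₁, and a constant C > 0 such that, writing P_j = A_{k_1} A_{k_2} ⋯ A_{k_{m_j}}, for all j ≥ 1: ‖v₁ P_j‖ ≥ C λ₁^j, ‖v₂ P_j‖ ≥ C λ₂^j, and ‖v₃ P_j‖ ≤ C^{-1} λ₃^j (row vectors multiplied on the left of the matrix products). In other words, the infinite matrix product A_{k_1} A_{k_2} ⋯ has two expanding directions and one contracting direction (two positive and one negative Lyapunov exponent). -/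
/-!
Nonnegative row vectors stay nonnegative under every `A_k`; their third coordinate never
decreases and their coordinate sum grows at each step by at least the third coordinate. Hence
`‖v P_n‖ → ∞` for every nonnegative `v` with `v 2 > 0`, in particular for `(1,0,1)` and
`(0,1,1)`.

With `D = diag(1,1,-1)`, the matrix `E_k = (D A_k D)⁻¹` has nonnegative entries, so the sets
`{y ∈ simplex : y D P_n D ≥ 0}` decrease in `n` and by compactness some `y` lies in all of them.
Then `z_n = y D P_n D ≥ 0` and `z_n · r_n = 1`, where `r_n` is the vector of row sums of
`(D P_n D)⁻¹ = E_{k_n} ⋯ E_{k_1}`. Condition (★) drives every row sum to infinity, so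
`(y D) P_n = z_n D → 0`. The three vectors have determinant `-∑ y_i = -1`, and the geometric
rates `2^j`, `2^{-j}` are obtained along a subsequence.
-/

open Filter Topology MeasureTheory

/-- The matrix `A_k` with real entries, rows `(0,k,k-1)`, `(1,0,0)`, `(0,1,1)`. -/
noncomputable def Amat (k : ℕ) : Matrix (Fin 3) (Fin 3) ℝ :=
  !![0, (k : ℝ), (k : ℝ) - 1; 1, 0, 0; 0, 1, 1]

/-- `Aprod k n = A_{k_1} A_{k_2} ⋯ A_{k_n}`. -/
noncomputable def Aprod (k : ℕ → ℕ) (n : ℕ) : Matrix (Fin 3) (Fin 3) ℝ :=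
  ((List.range n).map fun i => Amat (k (i + 1))).prod


open Matrix

section Nonneg

variable {R : Type*} [Semiring R] [PartialOrder R] [IsOrderedRing R]

lemma vecMul_nonneg {ι κ : Type*} [Fintype ι] {v : ι → R} {M : Matrix ι κ R} (hv : 0 ≤ v)
    (hM : ∀ i j, 0 ≤ M i j) : 0 ≤ v ᵥ* M :=
  fun j => Finset.sum_nonneg fun i _ => mul_nonneg (hv i) (hM i j)

lemma mul_apply_nonneg {ι κ μ : Type*} [Fintype κ] {M : Matrix ι κ R} {N : Matrix κ μ R}
    (hM : ∀ i j, 0 ≤ M i j) (hN : ∀ i j, 0 ≤ N i j) (i : ι) (j : μ) : 0 ≤ (M * N) i j :=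
  Finset.sum_nonneg fun l _ => mul_nonneg (hM i l) (hN l j)

end Nonneg

lemma le_inv_of_dotProduct_eq_one {K ι : Type*} [Field K] [LinearOrder K]
    [IsStrictOrderedRing K] [Fintype ι] {z r : ι → K} (hz : 0 ≤ z) (hr : 0 ≤ r)
    (h : z ⬝ᵥ r = 1) (i : ι) (hi : 0 < r i) : z i ≤ (r i)⁻¹ := by
  have : z i * r i ≤ 1 := h ▸ Finset.single_le_sum (f := fun j => z j * r j)
    (fun j _ => mul_nonneg (hz j) (hr j)) (Finset.mem_univ i)
  rwa [← one_div, le_div_iff₀ hi]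

lemma exists_strictMono_two_pow {f g h : ℕ → ℝ} (hf : Tendsto f atTop atTop)
    (hg : Tendsto g atTop atTop) (hh : Tendsto h atTop (𝓝 0)) :
    ∃ m : ℕ → ℕ, StrictMono m ∧ (∀ j, 1 ≤ m j) ∧
      ∀ j, 2 ^ j ≤ f (m j) ∧ 2 ^ j ≤ g (m j) ∧ h (m j) ≤ (1 / 2) ^ j := by
  obtain ⟨m, hm, hP⟩ := extraction_forall_of_eventually fun j : ℕ =>
    (eventually_ge_atTop 1).and <| (hf.eventually_ge_atTop (2 ^ j)).and <|
      (hg.eventually_ge_atTop (2 ^ j)).and <|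
        hh.eventually (ge_mem_nhds (show (0 : ℝ) < (1 / 2) ^ j by positivity))
  exact ⟨m, hm, fun j => (hP j).1, fun j => (hP j).2⟩

lemma StarCond.exists_two_le {k : ℕ → ℕ} (hstar : StarCond k) (p N : ℕ) :
    ∃ n ≥ N, Even (n + 1 + p) ∧ 2 ≤ k (n + 1) := by
  simp only [Nat.even_iff]
  rcases Nat.even_or_odd p with hp | hp <;> simp only [Nat.even_iff, Nat.odd_iff] at hp
  · obtain ⟨i, hi, hk⟩ := hstar.1 (N + 1)
    exact ⟨2 * i - 1, by omega, by omega, by rwa [show 2 * i - 1 + 1 = 2 * i by omega]⟩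
  · obtain ⟨i, hi, hk⟩ := hstar.2 (N + 1)
    exact ⟨2 * i - 2, by omega, by omega, by rwa [show 2 * i - 2 + 1 = 2 * i - 1 by omega]⟩

lemma Aprod_succ (k : ℕ → ℕ) (n : ℕ) : Aprod k (n + 1) = Aprod k n * Amat (k (n + 1)) := by
  simp [Aprod, List.range_succ]

section Expanding

variable {k : ℕ → ℕ}

lemma vecMul_Amat (κ : ℕ) (v : Fin 3 → ℝ) :
    v ᵥ* Amat κ = ![v 1, κ * v 0 + v 2, (κ - 1) * v 0 + v 2] := by
  ext j
  fin_cases j <;> simp [Amat, vecMul, dotProduct, Fin.sum_univ_three] <;> ring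

lemma vecMul_Aprod_succ (v : Fin 3 → ℝ) (n : ℕ) :
    v ᵥ* Aprod k (n + 1) = ![(v ᵥ* Aprod k n) 1,
      k (n + 1) * (v ᵥ* Aprod k n) 0 + (v ᵥ* Aprod k n) 2,
      (k (n + 1) - 1) * (v ᵥ* Aprod k n) 0 + (v ᵥ* Aprod k n) 2] := by
  rw [Aprod_succ, ← vecMul_vecMul, vecMul_Amat]

variable (hpos : ∀ i, 1 ≤ i → 1 ≤ k i) {v : Fin 3 → ℝ} (hv : 0 ≤ v)
include hpos hv

lemma nonneg_vecMul_Aprod (n : ℕ) : 0 ≤ v ᵥ* Aprod k n := by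
  induction n with
  | zero => simpa [Aprod] using hv
  | succ n ih =>
    have hk : (1 : ℝ) ≤ k (n + 1) := by exact_mod_cast hpos (n + 1) n.succ_pos
    set w := v ᵥ* Aprod k n
    have h0 : 0 ≤ w 0 := ih 0
    have h2 : 0 ≤ w 2 := ih 2
    intro j
    rw [vecMul_Aprod_succ]
    fin_cases j
    · exact ih 1
    · show 0 ≤ k (n + 1) * w 0 + w 2
      positivity
    · show 0 ≤ (k (n + 1) - 1) * w 0 + w 2
      nlinarith

lemma le_vecMul_Aprod_two (n : ℕ) : v 2 ≤ (v ᵥ* Aprod k n) 2 := by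
  induction n with
  | zero => simp [Aprod]
  | succ n ih =>
    have hk : (1 : ℝ) ≤ k (n + 1) := by exact_mod_cast hpos (n + 1) n.succ_pos
    set w := v ᵥ* Aprod k n
    have h0 : 0 ≤ w 0 := nonneg_vecMul_Aprod hpos hv n 0
    rw [vecMul_Aprod_succ]
    show v 2 ≤ (k (n + 1) - 1) * w 0 + w 2
    nlinarith

lemma sum_add_mul_le_sum_vecMul_Aprod (n : ℕ) :
    ∑ i, v i + n * v 2 ≤ ∑ i, (v ᵥ* Aprod k n) i := by
  induction n with
  | zero => simp [Aprod]
  | succ n ih =>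
    have hk : (1 : ℝ) ≤ k (n + 1) := by exact_mod_cast hpos (n + 1) n.succ_pos
    set w := v ᵥ* Aprod k n
    have h0 : 0 ≤ w 0 := nonneg_vecMul_Aprod hpos hv n 0
    have h2 : v 2 ≤ w 2 := le_vecMul_Aprod_two hpos hv n
    rw [vecMul_Aprod_succ]
    simp only [Fin.sum_univ_three] at ih ⊢
    show _ ≤ w 1 + (k (n + 1) * w 0 + w 2) + ((k (n + 1) - 1) * w 0 + w 2)
    push_cast
    nlinarith

lemma tendsto_norm_vecMul_Aprod (hv2 : 0 < v 2) :
    Tendsto (fun n => ‖v ᵥ* Aprod k n‖) atTop atTop := by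
  have hlin : Tendsto (fun n : ℕ => (n : ℝ) * (v 2 / 3)) atTop atTop :=
    tendsto_natCast_atTop_atTop.atTop_mul_const (by positivity)
  refine tendsto_atTop_mono (fun n => ?_) hlin
  have hsum := sum_add_mul_le_sum_vecMul_Aprod hpos hv n
  have hv0 : 0 ≤ ∑ i, v i := Finset.sum_nonneg fun i _ => hv i
  have hnorm : ∑ i, (v ᵥ* Aprod k n) i ≤ ∑ _i : Fin 3, ‖v ᵥ* Aprod k n‖ :=
    Finset.sum_le_sum fun i _ => (Real.le_norm_self _).trans (norm_le_pi_norm _ i)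
  simp only [Finset.sum_const, Finset.card_univ, Fintype.card_fin, nsmul_eq_mul,
    Nat.cast_ofNat] at hnorm
  nlinarith

end Expanding

noncomputable def signDiag : Matrix (Fin 3) (Fin 3) ℝ := !![1, 0, 0; 0, 1, 0; 0, 0, -1]

noncomputable def Emat (κ : ℕ) : Matrix (Fin 3) (Fin 3) ℝ :=
  !![0, 1, 0; 1, 0, (κ : ℝ) - 1; 1, 0, (κ : ℝ)]

lemma signDiag_mul_self : signDiag * signDiag = 1 := by
  rw [signDiag, mul_fin_three, one_fin_three]
  norm_num

lemma Amat_mul_signDiag_mul_Emat (κ : ℕ) : Amat κ * signDiag * Emat κ = signDiag := by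
  rw [Amat, signDiag, Emat, mul_fin_three, mul_fin_three]
  congr 1
  ring_nf

lemma vecMul_signDiag (y : Fin 3 → ℝ) : y ᵥ* signDiag = ![y 0, y 1, -y 2] := by
  ext j
  fin_cases j <;> simp [signDiag, vecMul, dotProduct, Fin.sum_univ_three]

lemma Emat_nonneg {κ : ℕ} (hκ : 1 ≤ κ) (i j : Fin 3) : 0 ≤ Emat κ i j := by
  have : (1 : ℝ) ≤ κ := by exact_mod_cast hκ
  fin_cases i <;> fin_cases j <;> simp [Emat, this]

noncomputable def twistedAprod (k : ℕ → ℕ) (n : ℕ) : Matrix (Fin 3) (Fin 3) ℝ :=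
  signDiag * Aprod k n * signDiag

noncomputable def Eprod (k : ℕ → ℕ) : ℕ → Matrix (Fin 3) (Fin 3) ℝ
  | 0 => 1
  | n + 1 => Emat (k (n + 1)) * Eprod k n

noncomputable def rowSums (k : ℕ → ℕ) (n : ℕ) : Fin 3 → ℝ := Eprod k n *ᵥ 1

section Contracting

variable {k : ℕ → ℕ}

lemma twistedAprod_succ_mul_Emat (n : ℕ) :
    twistedAprod k (n + 1) * Emat (k (n + 1)) = twistedAprod k n := by
  simp only [twistedAprod, Aprod_succ, mul_assoc]
  rw [← mul_assoc (Amat _), Amat_mul_signDiag_mul_Emat]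

lemma twistedAprod_mul_Eprod (n : ℕ) : twistedAprod k n * Eprod k n = 1 := by
  induction n with
  | zero => simp [twistedAprod, Eprod, Aprod, signDiag_mul_self]
  | succ n ih => rw [Eprod, ← mul_assoc, twistedAprod_succ_mul_Emat, ih]

lemma rowSums_succ (n : ℕ) : rowSums k (n + 1) = Emat (k (n + 1)) *ᵥ rowSums k n := by
  simp [rowSums, Eprod, mulVec_mulVec]

lemma Emat_mulVec (κ : ℕ) (r : Fin 3 → ℝ) :
    Emat κ *ᵥ r = ![r 1, r 0 + (κ - 1) * r 2, r 0 + κ * r 2] := by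
  ext i
  fin_cases i <;> simp [Emat, mulVec, dotProduct, Fin.sum_univ_three]

variable (hpos : ∀ i, 1 ≤ i → 1 ≤ k i)
include hpos

lemma Eprod_nonneg (n : ℕ) (i j : Fin 3) : 0 ≤ Eprod k n i j := by
  induction n generalizing i j with
  | zero => by_cases h : i = j <;> simp [Eprod, one_apply, h]
  | succ n ih => exact mul_apply_nonneg (Emat_nonneg (hpos _ n.succ_pos)) ih i j

lemma one_le_rowSums (n : ℕ) (i : Fin 3) : 1 ≤ rowSums k n i := by
  induction n generalizing i with
  | zero => simp [rowSums, Eprod]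
  | succ n ih =>
    have hk : (1 : ℝ) ≤ k (n + 1) := by exact_mod_cast hpos (n + 1) n.succ_pos
    set r := rowSums k n
    have h0 : 1 ≤ r 0 := ih 0
    have h2 : 1 ≤ r 2 := ih 2
    rw [rowSums_succ, Emat_mulVec]
    fin_cases i
    · exact ih 1
    · show 1 ≤ r 0 + (k (n + 1) - 1) * r 2
      nlinarith
    · show 1 ≤ r 0 + k (n + 1) * r 2
      nlinarith

lemma rowSums_two_ge (n : ℕ) : n + 1 ≤ rowSums k n 2 := by
  induction n with
  | zero => simp [rowSums, Eprod]
  | succ n ih =>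
    have hk : (1 : ℝ) ≤ k (n + 1) := by exact_mod_cast hpos (n + 1) n.succ_pos
    set r := rowSums k n
    have h0 : 1 ≤ r 0 := one_le_rowSums hpos n 0
    rw [rowSums_succ, Emat_mulVec]
    show ((n + 1 : ℕ) : ℝ) + 1 ≤ r 0 + k (n + 1) * r 2
    push_cast
    nlinarith

lemma rowSums_succ_one_ge {n : ℕ} (h : 2 ≤ k (n + 1)) : n + 1 ≤ rowSums k (n + 1) 1 := by
  have hk : (2 : ℝ) ≤ k (n + 1) := by exact_mod_cast h
  set r := rowSums k n
  have h0 : 1 ≤ r 0 := one_le_rowSums hpos n 0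
  have h2 : n + 1 ≤ r 2 := rowSums_two_ge hpos n
  rw [rowSums_succ, Emat_mulVec]
  show (n : ℝ) + 1 ≤ r 0 + (k (n + 1) - 1) * r 2
  nlinarith

/-- `r₀(n+1) = r₁(n)` and `r₁(n+1) ≥ r₀(n)`, so following the two coordinates alternately
gives nondecreasing sequences. -/
lemma monotone_rowSums_alternating (p : ℕ) :
    Monotone fun n => rowSums k n (if Even (n + p) then 1 else 0) := by
  refine monotone_nat_of_le_succ fun n => ?_
  have hk : (1 : ℝ) ≤ k (n + 1) := by exact_mod_cast hpos (n + 1) n.succ_pos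
  set r := rowSums k n
  have h2 : 1 ≤ r 2 := one_le_rowSums hpos n 2
  rw [rowSums_succ, Emat_mulVec, show n + 1 + p = n + p + 1 by ring]
  by_cases he : Even (n + p)
  · simp only [he, Nat.even_add_one, not_true_eq_false, if_true, if_false]
    exact le_rfl
  · simp only [he, Nat.even_add_one, not_false_eq_true, if_true, if_false]
    show r 0 ≤ r 0 + (k (n + 1) - 1) * r 2
    nlinarith

lemma exists_mem_stdSimplex_nonneg_vecMul_twistedAprod (n : ℕ) :
    ∃ y ∈ stdSimplex ℝ (Fin 3), 0 ≤ y ᵥ* twistedAprod k n := by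
  set x : Fin 3 → ℝ := 1 ᵥ* Eprod k n
  have hx : 0 ≤ x := vecMul_nonneg (fun _ => zero_le_one) (Eprod_nonneg hpos n)
  have hsum : ∑ j, x j = ∑ i, rowSums k n i := by
    rw [← dotProduct_one, ← dotProduct_mulVec, one_dotProduct, rowSums]
  have hsum_pos : 0 < ∑ j, x j :=
    hsum ▸ Finset.sum_pos (fun i _ => zero_lt_one.trans_le (one_le_rowSums hpos n i))
      Finset.univ_nonempty
  refine ⟨(∑ j, x j)⁻¹ • x,
    ⟨fun j => mul_nonneg (inv_nonneg.2 hsum_pos.le) (hx j), ?_⟩, ?_⟩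
  · simp only [Pi.smul_apply, smul_eq_mul, ← Finset.mul_sum]
    exact inv_mul_cancel₀ hsum_pos.ne'
  · rw [smul_vecMul, vecMul_vecMul, mul_eq_one_comm.1 (twistedAprod_mul_Eprod n), vecMul_one]
    exact smul_nonneg (inv_nonneg.2 hsum_pos.le) zero_le_one

lemma exists_mem_stdSimplex_forall_nonneg_vecMul_twistedAprod :
    ∃ y ∈ stdSimplex ℝ (Fin 3), ∀ n, 0 ≤ y ᵥ* twistedAprod k n := by
  let K : ℕ → Set (Fin 3 → ℝ) := fun n =>
    stdSimplex ℝ (Fin 3) ∩ {y | 0 ≤ y ᵥ* twistedAprod k n}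
  have hanti (n : ℕ) : K (n + 1) ⊆ K n := by
    rintro y ⟨hy, hyQ⟩
    refine ⟨hy, ?_⟩
    rw [Set.mem_ofPred_eq, ← twistedAprod_succ_mul_Emat, ← vecMul_vecMul]
    exact vecMul_nonneg hyQ (Emat_nonneg (hpos _ n.succ_pos))
  have hcone (n : ℕ) : IsClosed {y : Fin 3 → ℝ | 0 ≤ y ᵥ* twistedAprod k n} :=
    isClosed_le continuous_const (continuous_id.matrix_vecMul continuous_const)
  obtain ⟨y, hy⟩ := IsCompact.nonempty_iInter_of_sequence_nonempty_isCompact_isClosed K hanti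
    (fun n => exists_mem_stdSimplex_nonneg_vecMul_twistedAprod hpos n)
    ((isCompact_stdSimplex ℝ (Fin 3)).inter_right (hcone 0))
    (fun n => (isClosed_stdSimplex ℝ (Fin 3)).inter (hcone n))
  simp only [Set.mem_iInter] at hy
  exact ⟨y, (hy 0).1, fun n => (hy n).2⟩

lemma tendsto_rowSums (hstar : StarCond k) (i : Fin 3) :
    Tendsto (fun n => rowSums k n i) atTop atTop := by
  have halt (p : ℕ) :
      Tendsto (fun n => rowSums k n (if Even (n + p) then 1 else 0)) atTop atTop := by
    refine tendsto_atTop_atTop_of_monotone (monotone_rowSums_alternating hpos p) fun B => ?_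
    obtain ⟨n, hn, heven, hk⟩ := hstar.exists_two_le p ⌈B⌉₊
    refine ⟨n + 1, ?_⟩
    simp only [heven, if_true]
    calc B ≤ ⌈B⌉₊ := Nat.le_ceil B
      _ ≤ n + 1 := by exact_mod_cast hn.trans n.le_succ
      _ ≤ rowSums k (n + 1) 1 := rowSums_succ_one_ge hpos hk
  have hmin := tendsto_inf_atTop _ (halt 0) (halt 1)
  fin_cases i
  · refine tendsto_atTop_mono (fun n => ?_) hmin
    by_cases h : Even n <;> simp [h, Nat.even_add_one]
  · refine tendsto_atTop_mono (fun n => ?_) hmin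
    by_cases h : Even n <;> simp [h, Nat.even_add_one]
  · exact tendsto_atTop_mono (rowSums_two_ge hpos)
      (tendsto_atTop_add_const_right _ 1 tendsto_natCast_atTop_atTop)

lemma tendsto_vecMul_Aprod_zero (hstar : StarCond k) {y : Fin 3 → ℝ}
    (hy : y ∈ stdSimplex ℝ (Fin 3)) (hyQ : ∀ n, 0 ≤ y ᵥ* twistedAprod k n) :
    Tendsto (fun n => (y ᵥ* signDiag) ᵥ* Aprod k n) atTop (𝓝 0) := by
  set z : ℕ → Fin 3 → ℝ := fun n => y ᵥ* twistedAprod k n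
  have hdot (n : ℕ) : z n ⬝ᵥ rowSums k n = 1 := by
    rw [rowSums, dotProduct_mulVec, vecMul_vecMul, twistedAprod_mul_Eprod, vecMul_one,
      dotProduct_one]
    exact hy.2
  have hz : Tendsto z atTop (𝓝 0) := by
    refine tendsto_pi_nhds.2 fun i => squeeze_zero (fun n => hyQ n i) (fun n => ?_)
      (tendsto_rowSums hpos hstar i).inv_tendsto_atTop
    have hr (j : Fin 3) : 0 < rowSums k n j := zero_lt_one.trans_le (one_le_rowSums hpos n j)
    exact le_inv_of_dotProduct_eq_one (hyQ n) (fun j => (hr j).le) (hdot n) i (hr i)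
  have hzD : (fun n => (y ᵥ* signDiag) ᵥ* Aprod k n) = fun n => z n ᵥ* signDiag := by
    ext n : 1
    simp only [z, twistedAprod, vecMul_vecMul, mul_assoc, signDiag_mul_self, mul_one]
  rw [hzD]
  simpa [Function.comp_def] using
    ((continuous_id.matrix_vecMul continuous_const).tendsto 0).comp hz

end Contracting

lemma linearIndependent_with_vecMul_signDiag {y : Fin 3 → ℝ} (hy : ∑ i, y i = 1) :
    LinearIndependent ℝ ![![1, 0, 1], ![0, 1, 1], y ᵥ* signDiag] := by
  have hdet : (of ![![1, 0, 1], ![0, 1, 1], y ᵥ* signDiag]).det = -1 := by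
    rw [Fin.sum_univ_three] at hy
    rw [det_fin_three, vecMul_signDiag]
    show 1 * 1 * -y 2 - 1 * 1 * y 1 - 0 * 0 * -y 2 + 0 * 1 * y 0 + 1 * 0 * y 1 - 1 * 1 * y 0 = -1
    linarith
  exact linearIndependent_rows_iff_isUnit.2 ((isUnit_iff_isUnit_det _).2 (hdet ▸ isUnit_one.neg))

/-- the infinite product `A_{k_1} A_{k_2} ⋯` has two expanding and one
contracting direction: along a strictly increasing sequence of indices `m_j` there are
linearly independent row vectors `v₁, v₂, v₃`, numbers `0 < λ₃ < 1 < λ₂ ≤ λ₁` and `C > 0`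
with `‖v₁ P_j‖ ≥ C λ₁^j`, `‖v₂ P_j‖ ≥ C λ₂^j`, `‖v₃ P_j‖ ≤ C⁻¹ λ₃^j`
for `P_j = A_{k_1} ⋯ A_{k_{m_j}}`. -/
theorem statement6 (k : ℕ → ℕ) (hpos : ∀ i, 1 ≤ i → 1 ≤ k i) (hstar : StarCond k) :
    ∃ m : ℕ → ℕ, StrictMono m ∧ (∀ j, 1 ≤ m j) ∧
      ∃ v₁ v₂ v₃ : Fin 3 → ℝ, LinearIndependent ℝ ![v₁, v₂, v₃] ∧
        ∃ lam₁ lam₂ lam₃ C : ℝ,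
          0 < lam₃ ∧ lam₃ < 1 ∧ 1 < lam₂ ∧ lam₂ ≤ lam₁ ∧ 0 < C ∧
          ∀ j : ℕ, 1 ≤ j →
            C * lam₁ ^ j ≤ ‖Matrix.vecMul v₁ (Aprod k (m j))‖ ∧
            C * lam₂ ^ j ≤ ‖Matrix.vecMul v₂ (Aprod k (m j))‖ ∧
            ‖Matrix.vecMul v₃ (Aprod k (m j))‖ ≤ C⁻¹ * lam₃ ^ j := by
  obtain ⟨y, hy, hyQ⟩ := exists_mem_stdSimplex_forall_nonneg_vecMul_twistedAprod hpos
  have hexp (v : Fin 3 → ℝ) (hv : 0 ≤ v) (hv2 : v 2 = 1) :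
      Tendsto (fun n => ‖v ᵥ* Aprod k n‖) atTop atTop :=
    tendsto_norm_vecMul_Aprod hpos hv (hv2 ▸ zero_lt_one)
  obtain ⟨m, hm, hm1, hbounds⟩ := exists_strictMono_two_pow
    (hexp ![1, 0, 1] (fun i => by fin_cases i <;> simp) rfl)
    (hexp ![0, 1, 1] (fun i => by fin_cases i <;> simp) rfl)
    (tendsto_zero_iff_norm_tendsto_zero.1 (tendsto_vecMul_Aprod_zero hpos hstar hy hyQ))
  refine ⟨m, hm, hm1, _, _, _, linearIndependent_with_vecMul_signDiag hy.2,
    2, 2, 1 / 2, 1, by norm_num, by norm_num, by norm_num, le_rfl, one_pos, fun j _ => ?_⟩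
  simpa only [one_mul, inv_one] using hbounds j
end

section
/- The sets Δ_k := H_k(Δ), for integers k ≥ 1, have pairwise disjoint interiors, and Δ equals the closure of the union ⋃_{k≥1} Δ_k. -/
/-!
`H_k` maps `Δ` bijectively onto the triangle `Δ_k` with vertices `H_k(0,1) = (1,0)`,
`H_k(1,0) = (0,1/k)` and `H_k(0,0) = (0,1/(k+1))`, cut out by
`x ≥ 0`, `x + k y ≤ 1 ≤ x + (k+1) y`. For `k < l` the line `x + (k+1) y = 1` separates `Δ_k`
from `Δ_l`, so their interiors are disjoint. A point of `Δ` with `y > 0` lies in `Δ_k` for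
`k = ⌊(1-x)/y⌋`, and the points with `y > 0` are dense in `Δ`.
-/

/-- The unit simplex `Δ = {(u,v) : u ≥ 0, v ≥ 0, u+v ≤ 1}`. -/
def Delta : Set (ℝ × ℝ) := {p | 0 ≤ p.1 ∧ 0 ≤ p.2 ∧ p.1 + p.2 ≤ 1}

/-- The map `H_k(u,v) = (v, 1-v)/D_k` where `D_k = k(1-v) + 1 - u`. -/
noncomputable def Hmap (k : ℕ) (p : ℝ × ℝ) : ℝ × ℝ :=
  (p.2 / ((k : ℝ) * (1 - p.2) + 1 - p.1), (1 - p.2) / ((k : ℝ) * (1 - p.2) + 1 - p.1))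

/-- `Hcomp k n = H_{k 1} ∘ H_{k 2} ∘ ⋯ ∘ H_{k n}`. -/
noncomputable def Hcomp (k : ℕ → ℕ) : ℕ → (ℝ × ℝ) → (ℝ × ℝ)
  | 0 => id
  | n + 1 => Hcomp k n ∘ Hmap (k (n + 1))

open Filter Topology

def deltaCell (k : ℕ) : Set (ℝ × ℝ) :=
  {p | 0 ≤ p.1 ∧ p.1 + (k : ℝ) * p.2 ≤ 1 ∧ 1 ≤ p.1 + ((k : ℝ) + 1) * p.2}

lemma isClosed_Delta : IsClosed Delta :=
  (isClosed_le continuous_const continuous_fst).inter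
    ((isClosed_le continuous_const continuous_snd).inter
      (isClosed_le (continuous_fst.add continuous_snd) continuous_const))

lemma Hmap_mem_deltaCell {k : ℕ} (hk : 1 ≤ k) {p : ℝ × ℝ} (hp : p ∈ Delta) :
    Hmap k p ∈ deltaCell k := by
  obtain ⟨hu, hv, huv⟩ := hp
  have hk' : (1 : ℝ) ≤ k := by exact_mod_cast hk
  have hD : 0 < (k : ℝ) * (1 - p.2) + 1 - p.1 := by nlinarith
  refine ⟨div_nonneg hv hD.le, ?_, ?_⟩
  · rw [Hmap, ← mul_div_assoc, ← add_div, div_le_one hD]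
    linarith
  · rw [Hmap, ← mul_div_assoc, ← add_div, le_div_iff₀ hD]
    linarith

lemma Hmap_inverse (k : ℕ) {x y : ℝ} (hxy : x + y ≠ 0) :
    Hmap k ((x + ((k : ℝ) + 1) * y - 1) / (x + y), x / (x + y)) = (x, y) := by
  have hD : (k : ℝ) * (1 - x / (x + y)) + 1 - (x + ((k : ℝ) + 1) * y - 1) / (x + y)
      = 1 / (x + y) := by
    field_simp
    ring
  simp only [Hmap, hD, Prod.mk.injEq]
  exact ⟨by field_simp, by field_simp; ring⟩

lemma deltaCell_subset_image_Hmap (k : ℕ) : deltaCell k ⊆ Hmap k '' Delta := by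
  rintro ⟨x, y⟩ ⟨hx, h1, h2⟩
  have hy : 0 ≤ y := by linarith
  have hs : 0 < x + y := by
    rcases hy.eq_or_lt with rfl | hy <;> linarith
  refine ⟨_, ⟨?_, ?_, ?_⟩, Hmap_inverse k hs.ne'⟩
  · exact div_nonneg (by linarith) hs.le
  · exact div_nonneg hx hs.le
  · rw [← add_div, div_le_one hs]
    linarith

lemma image_Hmap_Delta {k : ℕ} (hk : 1 ≤ k) : Hmap k '' Delta = deltaCell k :=
  Set.Subset.antisymm (Set.MapsTo.image_subset fun _ hp => Hmap_mem_deltaCell hk hp)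
    (deltaCell_subset_image_Hmap k)

lemma deltaCell_subset_Delta {k : ℕ} (hk : 1 ≤ k) : deltaCell k ⊆ Delta := by
  rintro ⟨x, y⟩ ⟨hx, h1, h2⟩
  have hk' : (1 : ℝ) ≤ k := by exact_mod_cast hk
  have hy : 0 ≤ y := by linarith
  exact ⟨hx, hy, by nlinarith⟩

/-- A line in the plane has empty interior, so two sets lying on opposite sides of it
have disjoint interiors. -/
lemma interior_inter_interior_eq_empty_of_separated {A B : Set (ℝ × ℝ)} {r c : ℝ}
    (hA : A ⊆ {q | c ≤ q.1 + r * q.2}) (hB : B ⊆ {q | q.1 + r * q.2 ≤ c}) :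
    interior A ∩ interior B = ∅ := by
  rw [← interior_inter, Set.eq_empty_iff_forall_notMem]
  intro p hp
  have hline : ∀ᶠ q in 𝓝 p, q.1 + r * q.2 = c := by
    filter_upwards [mem_interior_iff_mem_nhds.1 hp] with q hq
    exact le_antisymm (hB hq.2) (hA hq.1)
  have hshift : Tendsto (fun t : ℝ => (p.1 + t, p.2)) (𝓝 0) (𝓝 p) := by
    have hcont : Continuous fun t : ℝ => (p.1 + t, p.2) := by fun_prop
    simpa using hcont.tendsto 0
  have hline' : ∀ᶠ t in 𝓝 (0 : ℝ), p.1 + t + r * p.2 = c := hshift.eventually hline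
  obtain ⟨t, ht, ht0⟩ :=
    ((hline'.filter_mono nhdsWithin_le_nhds).and (self_mem_nhdsWithin (s := {0}ᶜ))).exists
  have h0 : p.1 + 0 + r * p.2 = c := hline'.self_of_nhds
  exact ht0 (Set.mem_singleton_iff.2 (by linarith))

lemma interior_deltaCell_inter_eq_empty {k l : ℕ} (hkl : k < l) :
    interior (deltaCell k) ∩ interior (deltaCell l) = ∅ := by
  refine interior_inter_interior_eq_empty_of_separated (r := (k : ℝ) + 1) (c := 1)
    (fun p hp => hp.2.2) ?_
  rintro ⟨x, y⟩ ⟨_, h1, h2⟩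
  have hl : (k : ℝ) + 1 ≤ l := by exact_mod_cast hkl
  have hy : 0 ≤ y := by linarith
  show x + ((k : ℝ) + 1) * y ≤ 1
  nlinarith

/-- The defining inequalities of `deltaCell k` say `k ≤ (1 - x)/y < k + 1`. -/
lemma mem_deltaCell_floor {p : ℝ × ℝ} (hp : p ∈ Delta) (hy : 0 < p.2) :
    1 ≤ ⌊(1 - p.1) / p.2⌋₊ ∧ p ∈ deltaCell ⌊(1 - p.1) / p.2⌋₊ := by
  obtain ⟨hx, -, hxy⟩ := hp
  have hfloor_le := Nat.floor_le (div_nonneg (by linarith : 0 ≤ 1 - p.1) hy.le)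
  have hlt_floor := Nat.lt_floor_add_one ((1 - p.1) / p.2)
  rw [le_div_iff₀ hy] at hfloor_le
  rw [div_lt_iff₀ hy] at hlt_floor
  refine ⟨Nat.le_floor ?_, hx, by linarith, by linarith⟩
  rw [Nat.cast_one, le_div_iff₀ hy]
  linarith

/-- Approach `p` along the segment towards the vertex `(0,1)`. -/
lemma Delta_subset_closure_pos : Delta ⊆ closure {p | p ∈ Delta ∧ 0 < p.2} := by
  intro p hp
  have hcurve : Tendsto (fun t : ℝ => ((1 - t) * p.1, (1 - t) * p.2 + t)) (𝓝[>] 0) (𝓝 p) := by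
    have hcont : Continuous fun t : ℝ => ((1 - t) * p.1, (1 - t) * p.2 + t) := by fun_prop
    simpa using (hcont.tendsto 0).mono_left nhdsWithin_le_nhds
  refine mem_closure_of_tendsto hcurve ?_
  filter_upwards [Ioo_mem_nhdsGT one_pos] with t ⟨ht0, ht1⟩
  obtain ⟨hx, hy, hxy⟩ := hp
  exact ⟨⟨mul_nonneg (by linarith) hx, by nlinarith, by nlinarith⟩, by nlinarith⟩

/-- the sets `Δ_k = H_k(Δ)`, `k ≥ 1`, have pairwise disjoint interiors,
and `Δ` is the closure of their union. -/
theorem statement8 :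
    (∀ k l : ℕ, 1 ≤ k → 1 ≤ l → k ≠ l →
      interior (Hmap k '' Delta) ∩ interior (Hmap l '' Delta) = ∅) ∧
    Delta = closure (⋃ (k : ℕ) (_ : 1 ≤ k), Hmap k '' Delta) := by
  have hcells : (⋃ (k : ℕ) (_ : 1 ≤ k), Hmap k '' Delta) = ⋃ (k : ℕ) (_ : 1 ≤ k), deltaCell k :=
    Set.iUnion₂_congr fun k hk => image_Hmap_Delta hk
  refine ⟨fun k l hk hl hkl => ?_, ?_⟩
  · rw [image_Hmap_Delta hk, image_Hmap_Delta hl]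
    rcases hkl.lt_or_gt with h | h
    · exact interior_deltaCell_inter_eq_empty h
    · rw [Set.inter_comm]
      exact interior_deltaCell_inter_eq_empty h
  · rw [hcells]
    refine subset_antisymm ?_
      (closure_minimal (Set.iUnion₂_subset fun k hk => deltaCell_subset_Delta hk) isClosed_Delta)
    refine Delta_subset_closure_pos.trans (closure_mono ?_)
    rintro p ⟨hp, hy⟩
    obtain ⟨hk, hpk⟩ := mem_deltaCell_floor hp hy
    exact Set.mem_iUnion₂.2 ⟨_, hk, hpk⟩
end
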